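/- arXiv:1708.06411 — 5 statements merged into one kernel-verified Lean document; each statement's English description precedes it below -/
import Mathlib

section
/- Let G be a graph on n vertices and let (T,X) be a tree decomposition of G of width at most t−1. For every integer m with 1 ≤ m ≤ n and every real c with 0 < c < 1, there is a cut (B,W) in G with c·m < |B| ≤ m and e_G(B,W) ≤ ⌈log₂(1/(1−c))⌉·t·Δ(G), where Δ(G) is the maximum degree of G. -/
open scoped Classical

namespace MinBisection

noncomputable section

variable {V ι : Type*}

/-- The number of edges of `G` with one endpoint in `B` and the other outside of `B`,
i.e., the width `e_G(B, W)` of the cut `(B, W)` where `W` is the complement of `B`. -/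
def cutWidth (G : SimpleGraph V) (B : Finset V) : ℕ :=
  Nat.card {e : Sym2 V // ∃ x y, G.Adj x y ∧ x ∈ B ∧ y ∉ B ∧ e = s(x, y)}

/-- The number of edges of `G` whose endpoints lie in two different parts of the
partition `(B, W, Z)` of the vertex set. -/
def cutWidth3 (G : SimpleGraph V) (B W Z : Finset V) : ℕ :=
  Nat.card {e : Sym2 V // ∃ x y, G.Adj x y ∧ e = s(x, y) ∧
    ¬ ((x ∈ B ∧ y ∈ B) ∨ (x ∈ W ∧ y ∈ W) ∨ (x ∈ Z ∧ y ∈ Z))}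

/-- `(B, Bᶜ)` is a bisection: the sizes of the two parts differ by at most one. -/
def IsBisection [Fintype V] (B : Finset V) : Prop :=
  B.card ≤ Bᶜ.card + 1 ∧ Bᶜ.card ≤ B.card + 1

/-- The minimum bisection width `MinBis(G)`. -/
def minBis (G : SimpleGraph V) [Fintype V] : ℕ :=
  sInf {k | ∃ B : Finset V, IsBisection B ∧ cutWidth G B = k}

/-- The maximum degree `Δ(G)`. -/
def maxDeg (G : SimpleGraph V) [Fintype V] : ℕ :=
  Finset.univ.sup fun v => Nat.card {u // G.Adj v u}

/-- The number of vertices on a longest path in `G`. -/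
def longestPathCard (G : SimpleGraph V) : ℕ :=
  sSup {k | ∃ (u v : V) (p : G.Walk u v), p.IsPath ∧ k = p.support.length}

/-- The relative diameter `diam*` of a connected graph: the number of vertices on a
longest path divided by the number of vertices. -/
def diamStar (G : SimpleGraph V) [Fintype V] : ℝ :=
  (longestPathCard G : ℝ) / (Fintype.card V : ℝ)

/-- The number of vertices on a longest path contained in the connected component `c`. -/
def compLongestPathCard (G : SimpleGraph V) (c : G.ConnectedComponent) : ℕ :=
  sSup {k | ∃ (u v : V) (p : G.Walk u v), p.IsPath ∧ G.connectedComponentMk u = c ∧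
    k = p.support.length}

/-- The relative diameter `diam*` of a forest: the sum over all connected components of the
number of vertices on a longest path in the component, divided by the number of vertices. -/
def forestDiamStar (G : SimpleGraph V) [Fintype V] : ℝ :=
  letI : Fintype G.ConnectedComponent := Fintype.ofFinite _
  (∑ c : G.ConnectedComponent, (compLongestPathCard G c : ℝ)) / (Fintype.card V : ℝ)

/-- `(T, X)` is a tree decomposition of `G`. -/
structure IsTreeDecomp (G : SimpleGraph V) (T : SimpleGraph ι) (X : ι → Finset V) : Prop where
  isTree : T.IsTree
  mem_cluster : ∀ v : V, ∃ i, v ∈ X i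
  edge_cluster : ∀ ⦃u v : V⦄, G.Adj u v → ∃ i, u ∈ X i ∧ v ∈ X i
  inter_subset : ∀ ⦃i j : ι⦄ (p : T.Walk i j), p.IsPath → ∀ h ∈ p.support, X i ∩ X j ⊆ X h

/-- The weight `w(P, X)` of a path `p` of the tree `T` with respect to the clusters `X`:
the cardinality of the union of the clusters along the path. -/
def walkWeight (X : ι → Finset V) {T : SimpleGraph ι} {i j : ι} (p : T.Walk i j) : ℕ :=
  (p.support.toFinset.biUnion X).card

/-- The relative weight `r(T, X)` of a heaviest path in the tree decomposition `(T, X)`. -/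
def rTD [Fintype V] (T : SimpleGraph ι) (X : ι → Finset V) : ℝ :=
  (↑(sSup {w : ℕ | ∃ (i j : ι) (p : T.Walk i j), p.IsPath ∧ w = walkWeight X p}) : ℝ) /
    (Fintype.card V : ℝ)

/-- The path `p` is nonredundant: one of its two ends `i` is a nonredundant end, i.e.,
`X i ≠ ∅` and no cluster along the path contains the previous one when traversed from `i`. -/
def NonredundantPath (X : ι → Finset V) {T : SimpleGraph ι} {i j : ι} (p : T.Walk i j) : Prop :=
  (X i ≠ ∅ ∧ List.Chain' (fun a b => ¬ X b ⊆ X a) p.support) ∨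
  (X j ≠ ∅ ∧ List.Chain' (fun a b => ¬ X b ⊆ X a) p.reverse.support)

/-- `R_i`: the set of vertices whose path node (first node along `p`, traversed from the
end `i₀`, whose cluster contains the vertex) is `i`. -/
def Rset (X : ι → Finset V) {T : SimpleGraph ι} {i₀ j₀ : ι} (p : T.Walk i₀ j₀) (i : ι) :
    Set V :=
  {x | ∃ (k : ℕ) (hk : k < p.support.length), p.support.get ⟨k, hk⟩ = i ∧ x ∈ X i ∧
    ∀ (l : ℕ) (hl : l < k), x ∉ X (p.support.get ⟨l, hl.trans hk⟩)}

/-- `S_i`: the union of the clusters over the component `T_i` of `T - E(P)` containing `i`,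
minus `R = ⋃_{h ∈ V(P)} X^h`. -/
def Sset (X : ι → Finset V) {T : SimpleGraph ι} {i₀ j₀ : ι} (p : T.Walk i₀ j₀) (i : ι) :
    Set V :=
  {x | (∃ j, (∃ q : T.Walk i j, ∀ e ∈ q.edges, e ∉ p.edges) ∧ x ∈ X j) ∧
    ∀ h ∈ p.support, x ∉ X h}

end

end MinBisection

/-! Grow the vertex set `B` in rounds, starting from `∅`. While `|B| < m`, put `d = m - |B|`
and `U = Bᶜ`. For a node `i` and a neighbour `z`, the branch of `i` towards `z` consists of the
vertices outside `X i` lying in clusters of the component of `T - i` containing `z`. There is a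
node whose branches each contain at most `d` vertices of `U` and which, together with its
cluster, contain at least `d`: if some branch contains more than `d`, take one, from `i` towards
`z`, whose component has fewest nodes, and use `z`, whose branches away from `i` have smaller
components; otherwise any node works. A greedy union of these branches, topped up by vertices of
the cluster, has more than `d / 2` and at most `d` vertices of `U`, and each of its edges to the
rest of `U` meets the cluster. Adding it to `B` costs at most `t Δ` cut edges and at least halves
`m + 1 - |B|`; after `⌈log₂ (1 / (1 - c))⌉` rounds, `m + 1 - |B| ≤ (1 - c) (m + 1)`, so
`|B| > c m`. -/

namespace SimpleGraph

variable {ι : Type*} {H T : SimpleGraph ι}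

lemma eq_of_reachable_deleteIncidenceSet {a x : ι} (h : (H.deleteIncidenceSet a).Reachable x a) :
    x = a := by
  obtain ⟨p⟩ := h.symm
  cases p with
  | nil => rfl
  | cons h _ => exact absurd rfl (deleteIncidenceSet_adj.mp h).2.1

lemma reachable_deleteIncidenceSet_of_notMem_support {a x y : ι} (p : T.Walk x y)
    (ha : a ∉ p.support) : (T.deleteIncidenceSet a).Reachable x y :=
  ⟨p.toDeleteEdges _ fun _ he hea => ha (Walk.mem_support_of_mem_edges he hea.2)⟩

lemma exists_adj_reachable_deleteIncidenceSet (hH : H ≤ T) {i j : ι} (hr : H.Reachable i j)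
    (hij : i ≠ j) : ∃ z, H.Adj i z ∧ (T.deleteIncidenceSet i).Reachable z j := by
  obtain ⟨p⟩ := hr
  have hp := p.bypass_isPath
  cases hq : p.bypass with
  | nil => exact absurd rfl hij
  | cons h q =>
    rw [hq, Walk.cons_isPath_iff] at hp
    exact ⟨_, h, reachable_deleteIncidenceSet_of_notMem_support (q.mapLe hH)
      (by rw [Walk.support_mapLe_eq_support]; exact hp.2)⟩

lemma IsTree.eq_of_reachable_deleteIncidenceSet (hT : T.IsTree) {i z w : ι} (hz : T.Adj i z)
    (hw : T.Adj i w) (hr : (T.deleteIncidenceSet i).Reachable z w) : z = w := by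
  by_contra hzw
  refine isAcyclic_iff_forall_adj_isBridge.mp hT.isAcyclic hz ?_
  have hle : T.deleteIncidenceSet i ≤ T.deleteEdges {s(i, z)} := fun a b hab => by
    rw [deleteIncidenceSet_adj] at hab
    exact (deleteEdges_adj ..).mpr ⟨hab.1, by simp [hab.2.1, hab.2.2]⟩
  refine (Adj.reachable ((deleteEdges_adj ..).mpr ⟨hw, ?_⟩)).trans (hr.mono hle).symm
  simp [Ne.symm hzw, hw.ne']

end SimpleGraph

namespace MinBisection

open Finset SimpleGraph

section TreeDecomp

variable {V ι : Type*} {G : SimpleGraph V} {T : SimpleGraph ι} {X : ι → Finset V}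

lemma IsTreeDecomp.mem_of_not_reachable (hTD : IsTreeDecomp G T X) {i j k : ι} {v : V}
    (hj : v ∈ X j) (hk : v ∈ X k) (hjk : ¬(T.deleteIncidenceSet i).Reachable j k) : v ∈ X i := by
  obtain ⟨p⟩ := hTD.isTree.connected.preconnected j k
  by_cases hi : i ∈ p.bypass.support
  · exact hTD.inter_subset p.bypass p.bypass_isPath i hi (mem_inter.mpr ⟨hj, hk⟩)
  · exact absurd (reachable_deleteIncidenceSet_of_notMem_support p.bypass hi) hjk

end TreeDecomp

section Branch

variable {V ι : Type*} [Fintype ι] {G : SimpleGraph V} {H T : SimpleGraph ι} {X : ι → Finset V}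

noncomputable def branch (T : SimpleGraph ι) (i z : ι) : Finset ι :=
  univ.filter ((T.deleteIncidenceSet i).Reachable z)

noncomputable def branchVertices (T : SimpleGraph ι) (X : ι → Finset V) (i z : ι) : Finset V :=
  (branch T i z).biUnion X \ X i

lemma mem_branchVertices {i z : ι} {v : V} :
    v ∈ branchVertices T X i z ↔
      v ∉ X i ∧ ∃ j, (T.deleteIncidenceSet i).Reachable z j ∧ v ∈ X j := by
  simp [branchVertices, branch, and_comm]

lemma branch_ssubset (hT : T.IsTree) {i z w : ι} (hz : T.Adj i z) (hw : T.Adj z w)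
    (hwi : w ≠ i) : branch T z w ⊂ branch T i z := by
  have hzw : (T.deleteIncidenceSet i).Adj z w := deleteIncidenceSet_adj.mpr ⟨hw, hz.ne', hwi⟩
  refine (ssubset_iff_of_subset fun j hj => ?_).mpr ⟨z, ?_, ?_⟩
  · obtain ⟨p⟩ := (mem_filter.mp hj).2
    have hi : i ∉ p.support := fun hi =>
      hwi (hT.eq_of_reachable_deleteIncidenceSet hw hz.symm ⟨p.takeUntil i hi⟩)
    exact mem_filter.mpr ⟨mem_univ _, hzw.reachable.trans <|
      reachable_deleteIncidenceSet_of_notMem_support (p.mapLe (deleteIncidenceSet_le T z))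
        (by rwa [Walk.support_mapLe_eq_support])⟩
  · exact mem_filter.mpr ⟨mem_univ _, Reachable.refl z⟩
  · exact fun h => hw.ne (eq_of_reachable_deleteIncidenceSet (mem_filter.mp h).2).symm

lemma IsTreeDecomp.reachable_of_mem_branchVertices (hTD : IsTreeDecomp G T X) {i z k : ι} {v : V}
    (hv : v ∈ branchVertices T X i z) (hk : v ∈ X k) : (T.deleteIncidenceSet i).Reachable z k := by
  obtain ⟨hvi, j, hzj, hj⟩ := mem_branchVertices.mp hv
  by_contra hzk
  exact hvi (hTD.mem_of_not_reachable hj hk fun hjk => hzk (hzj.trans hjk))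

lemma IsTreeDecomp.mem_branchVertices_of_adj (hTD : IsTreeDecomp G T X) {i z : ι} {x y : V}
    (hxy : G.Adj x y) (hx : x ∈ branchVertices T X i z) (hy : y ∉ X i) :
    y ∈ branchVertices T X i z := by
  obtain ⟨k, hxk, hyk⟩ := hTD.edge_cluster hxy
  exact mem_branchVertices.mpr ⟨hy, k, hTD.reachable_of_mem_branchVertices hx hxk, hyk⟩

lemma mem_union_biUnion_branchVertices [DecidableRel H.Adj] (hH : H ≤ T) {U : Finset V}
    {i j : ι} {v : V} (hr : H.Reachable i j) (hv : v ∈ X j) (hU : v ∈ U) :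
    v ∈ X i ∩ U ∪ (univ.filter (H.Adj i)).biUnion fun z => branchVertices T X i z ∩ U := by
  by_cases hvi : v ∈ X i
  · exact mem_union_left _ (mem_inter.mpr ⟨hvi, hU⟩)
  obtain ⟨z, hz, hzj⟩ :=
    exists_adj_reachable_deleteIncidenceSet hH hr fun hij => hvi (hij ▸ hv)
  exact mem_union_right _ <| mem_biUnion.mpr
    ⟨z, mem_filter.mpr ⟨mem_univ _, hz⟩,
      mem_inter.mpr ⟨mem_branchVertices.mpr ⟨hvi, j, hzj, hv⟩, hU⟩⟩

end Branch

section Greedy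

variable {α β : Type*} [DecidableEq β]

lemma card_biUnion_le_or_exists_subset_half_lt {C : α → Finset β} {d : ℕ} (A : Finset α)
    (hC : ∀ z ∈ A, #(C z) ≤ d) :
    #(A.biUnion C) ≤ d ∨ ∃ A' ⊆ A, d < 2 * #(A'.biUnion C) ∧ #(A'.biUnion C) ≤ d := by
  induction A using Finset.induction_on with
  | empty => simp
  | insert z A _ ih =>
    obtain h | ⟨A', hA', h⟩ := ih fun w hw => hC w (mem_insert_of_mem hw)
    · by_cases hle : #((insert z A).biUnion C) ≤ d
      · exact .inl hle
      refine .inr ?_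
      by_cases hA : d < 2 * #(A.biUnion C)
      · exact ⟨A, subset_insert z A, hA, h⟩
      refine ⟨{z}, singleton_subset_iff.mpr (mem_insert_self z A), ?_⟩
      rw [biUnion_insert] at hle
      have := card_union_le (C z) (A.biUnion C)
      have := hC z (mem_insert_self z A)
      rw [singleton_biUnion]
      omega
    · exact .inr ⟨A', hA'.trans (subset_insert z A), h⟩

end Greedy

section Separation

variable {V ι : Type*} [Fintype ι] {G : SimpleGraph V} {T : SimpleGraph ι} {X : ι → Finset V}

lemma IsTreeDecomp.exists_node_small_branches_cover (hTD : IsTreeDecomp G T X) (U : Finset V)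
    {d : ℕ} (hd : d ≤ #U) :
    ∃ (i : ι) (A : Finset ι), (∀ z ∈ A, #(branchVertices T X i z ∩ U) ≤ d) ∧
      d ≤ #(X i ∩ U ∪ A.biUnion fun z => branchVertices T X i z ∩ U) := by
  by_cases hbig : ∃ p : ι × ι, T.Adj p.1 p.2 ∧ d < #(branchVertices T X p.1 p.2 ∩ U)
  · obtain ⟨p, hp⟩ := hbig
    obtain ⟨⟨i, z⟩, hiz, hmin⟩ :=
      (univ.filter fun p : ι × ι => T.Adj p.1 p.2 ∧ d < #(branchVertices T X p.1 p.2 ∩ U)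
        ).exists_min_image (fun p => #(branch T p.1 p.2)) ⟨p, mem_filter.mpr ⟨mem_univ _, hp⟩⟩
    obtain ⟨hiz, hdz⟩ := (mem_filter.mp hiz).2
    refine ⟨z, univ.filter ((T.deleteIncidenceSet i).Adj z), fun w hw => ?_,
      hdz.le.trans (card_le_card fun v hv => ?_)⟩
    · obtain ⟨hzw, -, hwi⟩ := deleteIncidenceSet_adj.mp (mem_filter.mp hw).2
      by_contra! hdw
      exact (card_lt_card (branch_ssubset hTD.isTree hiz hzw hwi)).not_ge
        (hmin (z, w) (mem_filter.mpr ⟨mem_univ _, hzw, hdw⟩))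
    · obtain ⟨hv, hU⟩ := mem_inter.mp hv
      obtain ⟨-, j, hzj, hj⟩ := mem_branchVertices.mp hv
      exact mem_union_biUnion_branchVertices (deleteIncidenceSet_le T i) hzj hj hU
  · push Not at hbig
    obtain ⟨i⟩ := hTD.isTree.connected.nonempty
    refine ⟨i, univ.filter (T.Adj i), fun z hz => hbig (i, z) (mem_filter.mp hz).2,
      hd.trans (card_le_card fun v hU => ?_)⟩
    obtain ⟨j, hj⟩ := hTD.mem_cluster v
    exact mem_union_biUnion_branchVertices le_rfl (hTD.isTree.connected.preconnected i j) hj hU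

lemma IsTreeDecomp.exists_subset_separated_by_cluster (hTD : IsTreeDecomp G T X)
    (U : Finset V) {d : ℕ} (hd : 1 ≤ d) (hdU : d ≤ #U) :
    ∃ i, ∃ B ⊆ U, d < 2 * #B ∧ #B ≤ d ∧
      ∀ ⦃x y : V⦄, G.Adj x y → x ∈ B → y ∈ U → y ∉ B → x ∈ X i ∨ y ∈ X i := by
  obtain ⟨i, A, hsmall, hcover⟩ := hTD.exists_node_small_branches_cover U hdU
  set C := fun z => branchVertices T X i z ∩ U
  obtain ⟨A', S, hS, hlow, hup⟩ : ∃ (A' : Finset ι) (S : Finset V), S ⊆ X i ∩ U ∧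
      d < 2 * #(A'.biUnion C ∪ S) ∧ #(A'.biUnion C ∪ S) ≤ d := by
    obtain hle | ⟨A', -, h⟩ := card_biUnion_le_or_exists_subset_half_lt (C := C) A hsmall
    · have := card_sdiff_add_card (X i ∩ U) (A.biUnion C)
      obtain ⟨S, hS, hSd⟩ := exists_subset_card_eq (s := (X i ∩ U) \ A.biUnion C)
        (n := d - #(A.biUnion C)) (by omega)
      have hdisj : Disjoint (A.biUnion C) S := disjoint_of_subset_right hS disjoint_sdiff
      refine ⟨A, S, hS.trans sdiff_subset, ?_⟩
      rw [card_union_of_disjoint hdisj]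
      omega
    · exact ⟨A', ∅, empty_subset _, by simpa using h⟩
  refine ⟨i, A'.biUnion C ∪ S, union_subset (biUnion_subset.mpr fun _ _ => inter_subset_right)
    (hS.trans inter_subset_right), hlow, hup, fun x y hxy hx hy hyB => ?_⟩
  rcases mem_union.mp hx with hx | hx
  · obtain ⟨z, hz, hxz⟩ := mem_biUnion.mp hx
    refine .inr (by_contra fun hyi => hyB (mem_union_left _ (mem_biUnion.mpr ⟨z, hz, ?_⟩)))
    exact mem_inter.mpr ⟨hTD.mem_branchVertices_of_adj hxy (mem_inter.mp hxz).1 hyi, hy⟩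
  · exact .inl (mem_inter.mp (hS hx)).1

end Separation

section Cut

variable {V : Type*} [Fintype V] (G : SimpleGraph V)

lemma cutWidth_empty : cutWidth G ∅ = 0 := by
  simp [cutWidth]

lemma degree_le_maxDeg (v : V) : G.degree v ≤ maxDeg G := by
  rw [← card_neighborSet_eq_degree, ← Nat.card_eq_fintype_card]
  exact le_sup (f := fun v => Nat.card {u // G.Adj v u}) (mem_univ v)

lemma cutWidth_union_le {A B B' : Finset V}
    (h : ∀ ⦃x y : V⦄, G.Adj x y → x ∈ B' → y ∉ B ∪ B' → x ∈ A ∨ y ∈ A) :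
    cutWidth G (B ∪ B') ≤ cutWidth G B + #A * maxDeg G := by
  have hsub : {e | ∃ x y, G.Adj x y ∧ x ∈ B ∪ B' ∧ y ∉ B ∪ B' ∧ e = s(x, y)} ⊆
      {e | ∃ x y, G.Adj x y ∧ x ∈ B ∧ y ∉ B ∧ e = s(x, y)} ∪
        ↑(A.biUnion fun v => G.incidenceFinset v) := by
    rintro _ ⟨x, y, hxy, hx, hy, rfl⟩
    rcases mem_union.mp hx with hx | hx
    · exact .inl ⟨x, y, hxy, hx, fun h => hy (mem_union_left _ h), rfl⟩
    refine .inr (mem_coe.mpr (mem_biUnion.mpr ?_))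
    rcases h hxy hx hy with hA | hA
    · exact ⟨x, hA, (mem_incidenceFinset ..).mpr ((mk'_mem_incidenceSet_left_iff ..).mpr hxy)⟩
    · exact ⟨y, hA, (mem_incidenceFinset ..).mpr ((mk'_mem_incidenceSet_right_iff ..).mpr hxy)⟩
  calc cutWidth G (B ∪ B') ≤ cutWidth G B + #(A.biUnion fun v => G.incidenceFinset v) :=
        (Set.ncard_le_ncard hsub).trans ((Set.ncard_union_le _ _).trans_eq (by
          rw [Set.ncard_coe_finset]; rfl))
    _ ≤ cutWidth G B + ∑ v ∈ A, G.degree v := by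
        gcongr
        simpa only [card_incidenceFinset_eq_degree] using
          card_biUnion_le (s := A) (t := fun v => G.incidenceFinset v)
    _ ≤ cutWidth G B + #A * maxDeg G := by
        gcongr
        exact sum_le_card_nsmul _ _ _ fun v _ => degree_le_maxDeg G v

end Cut

section Iteration

variable {V ι : Type*} [Fintype V] [Fintype ι] {G : SimpleGraph V} {T : SimpleGraph ι}
  {X : ι → Finset V} {t m : ℕ}

lemma IsTreeDecomp.exists_halving_extension (hTD : IsTreeDecomp G T X)
    (hwidth : ∀ i, #(X i) ≤ t) (hm : m ≤ Fintype.card V) {B₀ : Finset V} (hB₀ : #B₀ < m) :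
    ∃ B : Finset V, #B ≤ m ∧ 2 * (m + 1 - #B) ≤ m + 1 - #B₀ ∧
      cutWidth G B ≤ cutWidth G B₀ + t * maxDeg G := by
  obtain ⟨i, B', hB', hlow, hup, hbd⟩ := hTD.exists_subset_separated_by_cluster B₀ᶜ
    (d := m - #B₀) (by omega) (by rw [card_compl]; omega)
  have hcard := card_union_of_disjoint (disjoint_of_subset_right hB' disjoint_compl_right)
  refine ⟨B₀ ∪ B', by omega, by omega, ?_⟩
  calc cutWidth G (B₀ ∪ B') ≤ cutWidth G B₀ + #(X i) * maxDeg G :=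
        cutWidth_union_le G fun x y hxy hx hy => hbd hxy hx
          (mem_compl.mpr fun h => hy (mem_union_left _ h)) fun h => hy (mem_union_right _ h)
    _ ≤ cutWidth G B₀ + t * maxDeg G := by gcongr; exact hwidth i

lemma IsTreeDecomp.exists_cut_two_pow (hTD : IsTreeDecomp G T X) (hwidth : ∀ i, #(X i) ≤ t)
    (hm : m ≤ Fintype.card V) (k : ℕ) :
    ∃ B : Finset V, #B ≤ m ∧ (#B = m ∨ 2 ^ k * (m + 1 - #B) ≤ m + 1) ∧
      cutWidth G B ≤ k * (t * maxDeg G) := by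
  induction k with
  | zero => exact ⟨∅, by simp, .inr (by simp), by simp [cutWidth_empty]⟩
  | succ k ih =>
    obtain ⟨B₀, hB₀m, hB₀, hcut₀⟩ := ih
    rcases hB₀m.eq_or_lt with hfull | hlt
    · exact ⟨B₀, hB₀m, .inl hfull, hcut₀.trans (Nat.mul_le_mul_right _ k.le_succ)⟩
    obtain ⟨B, hBm, hhalf, hcut⟩ := hTD.exists_halving_extension hwidth hm hlt
    refine ⟨B, hBm, .inr ?_, hcut.trans (by rw [Nat.succ_mul]; gcongr)⟩
    calc 2 ^ (k + 1) * (m + 1 - #B) = 2 ^ k * (2 * (m + 1 - #B)) := by ring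
      _ ≤ 2 ^ k * (m + 1 - #B₀) := Nat.mul_le_mul_left _ hhalf
      _ ≤ m + 1 := hB₀.resolve_left hlt.ne

end Iteration

lemma one_le_one_sub_mul_two_pow_ceil_logb {c : ℝ} (hc : c < 1) :
    1 ≤ (1 - c) * 2 ^ ⌈Real.logb 2 (1 / (1 - c))⌉₊ := by
  have h1c : 0 < 1 - c := by linarith
  have h : 1 / (1 - c) ≤ 2 ^ ⌈Real.logb 2 (1 / (1 - c))⌉₊ := by
    rw [← Real.rpow_natCast, ← Real.logb_le_iff_le_rpow one_lt_two (by positivity)]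
    exact Nat.le_ceil _
  rwa [div_le_iff₀ h1c, mul_comm] at h

lemma mul_lt_of_two_pow_ceil_logb_mul_le {c : ℝ} (hc0 : 0 < c) (hc1 : c < 1) {m b : ℕ}
    (hb : b ≤ m) (h : 2 ^ ⌈Real.logb 2 (1 / (1 - c))⌉₊ * (m + 1 - b) ≤ m + 1) :
    c * m < b := by
  have hpow := one_le_one_sub_mul_two_pow_ceil_logb hc1
  have hreal := (Nat.cast_le (α := ℝ)).mpr h
  push_cast [Nat.cast_sub (by omega : b ≤ m + 1)] at hreal
  have hgap : (0 : ℝ) ≤ m + 1 - b := by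
    have : (b : ℝ) ≤ m := by exact_mod_cast hb
    linarith
  nlinarith [mul_le_mul_of_nonneg_left hpow hgap]

end MinBisection

/-- (Approximate cut.) Let `G` be a graph on `n` vertices and `(T, X)` a tree
decomposition of `G` of width at most `t - 1`. For every integer `1 ≤ m ≤ n` and every real
`0 < c < 1`, there is a cut `(B, W)` in `G` with `c m < |B| ≤ m` and
`e_G(B, W) ≤ ⌈log₂(1/(1-c))⌉ t Δ(G)`. -/
theorem MinBisection.approx_cut {V ι : Type*} [Fintype V] [Fintype ι]
    (G : SimpleGraph V) (T : SimpleGraph ι) (X : ι → Finset V) (t : ℕ)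
    (hTD : IsTreeDecomp G T X) (hwidth : ∀ i, (X i).card ≤ t)
    (m : ℕ) (hm1 : 1 ≤ m) (hmn : m ≤ Fintype.card V)
    (c : ℝ) (hc0 : 0 < c) (hc1 : c < 1) :
    ∃ B : Finset V, c * (m : ℝ) < (B.card : ℝ) ∧ B.card ≤ m ∧
      cutWidth G B ≤ ⌈Real.logb 2 (1 / (1 - c))⌉₊ * t * maxDeg G := by
  obtain ⟨B, hBm, hB, hcut⟩ := hTD.exists_cut_two_pow hwidth hmn ⌈Real.logb 2 (1 / (1 - c))⌉₊
  refine ⟨B, ?_, hBm, hcut.trans_eq (mul_assoc ..).symm⟩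
  rcases hB with hB | hB
  · have hm : (1 : ℝ) ≤ m := by exact_mod_cast hm1
    rw [hB]
    nlinarith
  · exact mul_lt_of_two_pow_ceil_logb_mul_le hc0 hc1 hBm hB
end

section
/- Let G be a graph, let (T,X) be a tree decomposition of G, and let P ⊆ T be a path with ends i₀ and j₀ such that i₀ is a nonredundant end of P. Then the sets R_i for i ∈ V(P) together with the sets S_i for i ∈ V(P) are pairwise disjoint and their union is V(G); moreover, R_i ≠ ∅ for every i ∈ V(P). -/
open scoped Classical

/-!
Each vertex of `R` belongs to exactly one `R_i`, namely at its path node, and no vertex of `R`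
lies in any `S_j`. A vertex outside `R` lies in some cluster, and a walk in `T` from that
cluster to `P`, cut at its first node on `P`, shows that it lies in some `S_i`. If `x` lay in
`S_i` and `S_j` with `i ≠ j`, then by (T3) the path between two clusters containing `x` avoids
`V(P)`, so `T_i` and `T_j` would be joined by a walk avoiding `E(P)` as well as along `P`,
which is impossible in a tree. Finally `R_{i₀} = X^{i₀} ≠ ∅`, and for `h ≥ 1` a vertex of
`X^{i_h} \ X^{i_{h-1}}` lies in no earlier cluster of `P`, since by (T3) the nodes of `P`
whose cluster contains it form a subpath.
-/

namespace SimpleGraph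

variable {V : Type*} {G : SimpleGraph V}

namespace Walk

theorem edges_disjoint_of_support_disjoint {u v a b : V} {p : G.Walk u v} {q : G.Walk a b}
    (h : ∀ t ∈ q.support, t ∉ p.support) : ∀ e ∈ q.edges, e ∉ p.edges := by
  intro e hq hp
  induction e with
  | h x y => exact h x (q.fst_mem_support_of_mem_edges hq) (p.fst_mem_support_of_mem_edges hp)

theorem exists_walk_edges_subset_of_mem_support {u v a b : V} (p : G.Walk u v)
    (ha : a ∈ p.support) (hb : b ∈ p.support) : ∃ q : G.Walk a b, q.edges ⊆ p.edges := by
  classical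
  refine ⟨(p.takeUntil a ha).reverse.append (p.takeUntil b hb), fun e he => ?_⟩
  rw [edges_append, edges_reverse, List.mem_append, List.mem_reverse] at he
  exact he.elim (fun h => p.edges_takeUntil_subset_edges ha h)
    (fun h => p.edges_takeUntil_subset_edges hb h)

theorem exists_walk_from_support_edges_disjoint {u v a b : V} (p : G.Walk u v)
    (w : G.Walk a b) (hb : b ∈ p.support) :
    ∃ i ∈ p.support, ∃ q : G.Walk i a, ∀ e ∈ q.edges, e ∉ p.edges := by
  induction w with
  | nil => exact ⟨_, hb, nil, by simp⟩
  | @cons a c b hac w ih =>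
    by_cases ha : a ∈ p.support
    · exact ⟨a, ha, nil, by simp⟩
    obtain ⟨i, hi, q, hq⟩ := ih hb
    refine ⟨i, hi, q.concat hac.symm, fun e he hep => ?_⟩
    rw [edges_concat, List.concat_eq_append, List.mem_append, List.mem_singleton] at he
    rcases he with he | rfl
    · exact hq e he hep
    · exact ha (p.snd_mem_support_of_mem_edges hep)

theorem rel_getVert_succ_of_isChain {R : V → V → Prop} {u v : V} {p : G.Walk u v}
    (h : p.support.IsChain R) {k : ℕ} (hk : k < p.length) :
    R (p.getVert k) (p.getVert (k + 1)) := by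
  rw [p.getVert_eq_support_getElem hk.le, p.getVert_eq_support_getElem hk]
  exact List.isChain_iff_getElem.mp h k (by simp; omega)

end Walk

theorem IsAcyclic.eq_of_walks_edges_disjoint (hG : G.IsAcyclic) {u v : V} (q r : G.Walk u v)
    (h : ∀ e ∈ q.edges, e ∉ r.edges) : u = v := by
  by_contra huv
  have hbypass : q.bypass = r.bypass := congrArg Subtype.val <|
    (hG.subsingleton_path u v).elim ⟨_, q.bypass_isPath⟩ ⟨_, r.bypass_isPath⟩
  have hmem := q.bypass.mk_start_snd_mem_edges (Walk.not_nil_of_ne huv)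
  have hmem' : s(u, q.bypass.snd) ∈ r.bypass.edges := hbypass ▸ hmem
  exact h _ (q.edges_bypass_subset_edges hmem) (r.edges_bypass_subset_edges hmem')

end SimpleGraph

namespace MinBisection

open SimpleGraph Walk

variable {V ι : Type*} {G : SimpleGraph V} {T : SimpleGraph ι} {X : ι → Finset V}
  {i₀ j₀ : ι} {p : T.Walk i₀ j₀}

theorem IsTreeDecomp.mem_getVert_of_le_of_le (hTD : IsTreeDecomp G T X) (hp : p.IsPath)
    {x : V} {l m k : ℕ} (hlm : l ≤ m) (hmk : m ≤ k) (hl : x ∈ X (p.getVert l))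
    (hk : x ∈ X (p.getVert k)) : x ∈ X (p.getVert m) := by
  let q := (p.take k).drop l
  have hstart : (p.take k).getVert l = p.getVert l := by
    rw [take_getVert, min_eq_right (hlm.trans hmk)]
  have hmid : p.getVert m ∈ q.support := by
    have hm : q.getVert (m - l) = p.getVert m := by
      rw [drop_getVert, take_getVert, Nat.add_sub_cancel' hlm, min_eq_right hmk]
    exact hm ▸ q.getVert_mem_support _
  exact hTD.inter_subset q ((hp.take k).drop l) _ hmid (Finset.mem_inter.mpr ⟨hstart ▸ hl, hk⟩)

theorem mem_Rset_iff {i : ι} {x : V} :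
    x ∈ Rset X p i ↔ ∃ k ≤ p.length, p.getVert k = i ∧ x ∈ X i ∧ ∀ l < k, x ∉ X (p.getVert l) := by
  simp only [Rset, Set.mem_ofPred_eq, List.get_eq_getElem, p.support_getElem_eq_getVert,
    length_support, Nat.lt_succ_iff]
  exact exists_congr fun k => by tauto

theorem Rset_disjoint {i j : ι} (hij : i ≠ j) : Disjoint (Rset X p i) (Rset X p j) := by
  refine Set.disjoint_left.mpr fun x hxi hxj => ?_
  obtain ⟨k, -, rfl, hxk, hmin⟩ := mem_Rset_iff.mp hxi
  obtain ⟨k', -, rfl, hxk', hmin'⟩ := mem_Rset_iff.mp hxj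
  rcases lt_trichotomy k k' with h | rfl | h
  · exact hmin' k h hxk
  · exact hij rfl
  · exact hmin k' h hxk'

theorem Rset_disjoint_Sset {i j : ι} : Disjoint (Rset X p i) (Sset X p j) := by
  refine Set.disjoint_left.mpr fun x hR hS => ?_
  obtain ⟨k, -, rfl, hx, -⟩ := mem_Rset_iff.mp hR
  exact hS.2 _ (p.getVert_mem_support k) hx

theorem IsTreeDecomp.Sset_disjoint (hTD : IsTreeDecomp G T X) {i j : ι} (hi : i ∈ p.support)
    (hj : j ∈ p.support) (hij : i ≠ j) : Disjoint (Sset X p i) (Sset X p j) := by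
  refine Set.disjoint_left.mpr ?_
  rintro x ⟨⟨a, ⟨qi, hqi⟩, hxa⟩, hxR⟩ ⟨⟨b, ⟨qj, hqj⟩, hxb⟩, -⟩
  obtain ⟨qp, hqp⟩ := p.exists_walk_edges_subset_of_mem_support hi hj
  obtain ⟨w⟩ := hTD.isTree.connected.preconnected a b
  have hr : ∀ t ∈ w.bypass.support, t ∉ p.support := fun t ht htp =>
    hxR t htp (hTD.inter_subset _ w.bypass_isPath t ht (Finset.mem_inter.mpr ⟨hxa, hxb⟩))
  refine hij (hTD.isTree.isAcyclic.eq_of_walks_edges_disjoint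
    (qi.append (w.bypass.append qj.reverse)) qp fun e he hep => ?_)
  simp only [edges_append, edges_reverse, List.mem_append, List.mem_reverse] at he
  rcases he with he | he | he
  · exact hqi e he (hqp hep)
  · exact edges_disjoint_of_support_disjoint hr e he (hqp hep)
  · exact hqj e he (hqp hep)

theorem exists_mem_Rset_of_mem_getVert {x : V} (hx : ∃ k ≤ p.length, x ∈ X (p.getVert k)) :
    ∃ i ∈ p.support, x ∈ Rset X p i := by
  obtain ⟨hk, hxk⟩ := Nat.find_spec hx
  exact ⟨_, p.getVert_mem_support _, mem_Rset_iff.mpr ⟨Nat.find hx, hk, rfl, hxk,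
    fun l hl hxl => Nat.find_min hx hl ⟨by omega, hxl⟩⟩⟩

theorem IsTreeDecomp.exists_mem_Sset (hTD : IsTreeDecomp G T X) {x : V}
    (hx : ∀ h ∈ p.support, x ∉ X h) : ∃ i ∈ p.support, x ∈ Sset X p i := by
  obtain ⟨a, hxa⟩ := hTD.mem_cluster x
  obtain ⟨w⟩ := hTD.isTree.connected.preconnected a i₀
  obtain ⟨i, hi, q, hq⟩ := p.exists_walk_from_support_edges_disjoint w p.start_mem_support
  exact ⟨i, hi, ⟨a, ⟨q, hq⟩, hxa⟩, hx⟩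

theorem IsTreeDecomp.iUnion_Rset_union_Sset (hTD : IsTreeDecomp G T X) :
    ⋃ i ∈ p.support, Rset X p i ∪ Sset X p i = Set.univ := by
  refine Set.eq_univ_of_forall fun x => ?_
  simp only [Set.mem_iUnion, Set.mem_union, exists_prop]
  by_cases hx : ∃ k ≤ p.length, x ∈ X (p.getVert k)
  · obtain ⟨i, hi, hxi⟩ := exists_mem_Rset_of_mem_getVert hx
    exact ⟨i, hi, Or.inl hxi⟩
  · have hxR : ∀ h ∈ p.support, x ∉ X h := fun h hh hxh => by
      obtain ⟨k, rfl, hk⟩ := mem_support_iff_exists_getVert.mp hh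
      exact hx ⟨k, hk, hxh⟩
    obtain ⟨i, hi, hxi⟩ := hTD.exists_mem_Sset hxR
    exact ⟨i, hi, Or.inr hxi⟩

theorem IsTreeDecomp.Rset_nonempty (hTD : IsTreeDecomp G T X) (hp : p.IsPath) (hne : X i₀ ≠ ∅)
    (hnr : p.support.IsChain fun a b => ¬ X b ⊆ X a) {i : ι} (hi : i ∈ p.support) :
    (Rset X p i).Nonempty := by
  obtain ⟨k, rfl, hk⟩ := mem_support_iff_exists_getVert.mp hi
  cases k with
  | zero =>
    obtain ⟨x, hx⟩ := Finset.nonempty_iff_ne_empty.mpr hne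
    exact ⟨x, mem_Rset_iff.mpr ⟨0, hk, rfl, by rwa [getVert_zero], by simp⟩⟩
  | succ k =>
    obtain ⟨x, hx, hxk⟩ := Finset.not_subset.mp (rel_getVert_succ_of_isChain hnr hk)
    exact ⟨x, mem_Rset_iff.mpr ⟨k + 1, hk, rfl, hx, fun l hl hxl =>
      hxk (hTD.mem_getVert_of_le_of_le hp (Nat.le_of_lt_succ hl) k.le_succ hxl hx)⟩⟩

end MinBisection

theorem MinBisection.partition_Rset_Sset_general {V ι : Type*}
    (G : SimpleGraph V) (T : SimpleGraph ι) (X : ι → Finset V)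
    (hTD : IsTreeDecomp G T X) {i₀ j₀ : ι} (p : T.Walk i₀ j₀) (hp : p.IsPath)
    (hne : X i₀ ≠ ∅) (hnr : List.Chain' (fun a b => ¬ X b ⊆ X a) p.support) :
    (∀ i ∈ p.support, ∀ j ∈ p.support, i ≠ j → Disjoint (Rset X p i) (Rset X p j)) ∧
    (∀ i ∈ p.support, ∀ j ∈ p.support, i ≠ j → Disjoint (Sset X p i) (Sset X p j)) ∧
    (∀ i ∈ p.support, ∀ j ∈ p.support, Disjoint (Rset X p i) (Sset X p j)) ∧
    (⋃ i ∈ p.support, Rset X p i ∪ Sset X p i) = Set.univ ∧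
    (∀ i ∈ p.support, (Rset X p i).Nonempty) :=
  ⟨fun _ _ _ _ hij => Rset_disjoint hij,
    fun _ hi _ hj hij => hTD.Sset_disjoint hi hj hij,
    fun _ _ _ _ => Rset_disjoint_Sset,
    hTD.iUnion_Rset_union_Sset,
    fun _ hi => hTD.Rset_nonempty hp hne hnr hi⟩

/-- Let `(T, X)` be a tree decomposition of `G` and `P ⊆ T` a path with a
nonredundant end `i₀`. Then the sets `R_i` and the sets `S_i` for `i ∈ V(P)` are pairwise
disjoint, their union is `V(G)`, and `R_i ≠ ∅` for every `i ∈ V(P)`. -/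
theorem MinBisection.partition_Rset_Sset {V ι : Type*} [Fintype V] [Fintype ι]
    (G : SimpleGraph V) (T : SimpleGraph ι) (X : ι → Finset V)
    (hTD : IsTreeDecomp G T X) {i₀ j₀ : ι} (p : T.Walk i₀ j₀) (hp : p.IsPath)
    (hne : X i₀ ≠ ∅) (hnr : List.Chain' (fun a b => ¬ X b ⊆ X a) p.support) :
    (∀ i ∈ p.support, ∀ j ∈ p.support, i ≠ j → Disjoint (Rset X p i) (Rset X p j)) ∧
    (∀ i ∈ p.support, ∀ j ∈ p.support, i ≠ j → Disjoint (Sset X p i) (Sset X p j)) ∧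
    (∀ i ∈ p.support, ∀ j ∈ p.support, Disjoint (Rset X p i) (Sset X p j)) ∧
    (⋃ i ∈ p.support, Rset X p i ∪ Sset X p i) = Set.univ ∧
    (∀ i ∈ p.support, (Rset X p i).Nonempty) :=
  MinBisection.partition_Rset_Sset_general G T X hTD p hp hne hnr
end

section
/- Let G be a graph, let (T,X) be a tree decomposition of G, and let P ⊆ T be a path with ends i₀ and j₀ such that i₀ is a nonredundant end of P. Fix a node i ∈ V(P); if i ≠ i₀ let V_P⁻ be the node set of the component of P − i containing the neighbor of i on P on the side of i₀, and if i ≠ j₀ let V_P⁺ be the node set of the component of P − i containing the neighbor of i on P on the side of j₀. Set A⁻ := ⋃_{j∈V_P⁻}(R_j ∪ S_j) (defined when i ≠ i₀) and A⁺ := ⋃_{j∈V_P⁺}(R_j ∪ S_j) (defined when i ≠ j₀). Then R_i, S_i, A⁻, and A⁺ (those among them that are defined) partition V(G); every vertex of R_i is isolated in G − E_G(i); and no edge of G − E_G(i) joins two distinct sets among S_i, A⁻, A⁺. -/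
open scoped Classical

/-!
Every vertex `x` gets a position `l` on `P`: the index of its path node if `x` lies in a
cluster on `P`, and otherwise the index of the component `T_{p_l}` of `T - E(P)` containing a
cluster with `x`. That index is unique because the clusters containing `x` span a subtree
avoiding `P`, hence lying in one component of `T - E(P)`, and distinct nodes of `P` lie in
distinct components since `T` is a tree. So the blocks `R_{p_l} ∪ S_{p_l}` partition `V(G)`.
An edge `uv` avoiding `X^{p_k}` lies in a cluster `X^h` with `h ∈ T_{p_s}`; (T3) along the tree
path from `p_l` through `p_s` to `h` puts the position of each endpoint on the same side of `k`
as `s`, and an endpoint of position `k` avoids `X^{p_k}`, so it lies in `S_{p_k}`.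
-/

namespace SimpleGraph

open Walk

variable {ι : Type*} {T : SimpleGraph ι}

theorem IsAcyclic.eq_of_isPath_of_reachable_deleteEdges (hT : T.IsAcyclic) {s : Set (Sym2 ι)}
    {u v : ι} {q : T.Walk u v} (hq : q.IsPath) (hqs : ∀ e ∈ q.edges, e ∈ s)
    (h : (T.deleteEdges s).Reachable u v) : u = v := by
  obtain ⟨w⟩ := h
  have hwq : w.bypass.mapLe (deleteEdges_le s) = q := congrArg Subtype.val <|
    (hT.subsingleton_path u v).elim ⟨_, w.bypass_isPath.mapLe _⟩ ⟨q, hq⟩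
  cases q with
  | nil => rfl
  | @cons _ x _ huv q =>
    have he : s(u, x) ∈ w.bypass.edges := by
      rw [← edges_mapLe_eq_edges (deleteEdges_le s), hwq, edges_cons]
      exact List.mem_cons_self
    have := w.bypass.edges_subset_edgeSet he
    rw [edgeSet_deleteEdges] at this
    exact absurd (hqs _ List.mem_cons_self) this.2

namespace Walk

variable {a b : ι} {p : T.Walk a b}

theorem support_get_eq_getVert (p : T.Walk a b) (l : ℕ) (hl : l < p.support.length) :
    p.support.get ⟨l, hl⟩ = p.getVert l :=
  p.support_getElem_eq_getVert hl

theorem IsPath.exists_isPath_getVert_of_le (hp : p.IsPath) {l m : ℕ} (hlm : l ≤ m) :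
    ∃ q : T.Walk (p.getVert l) (p.getVert m), q.IsPath ∧ (∀ e ∈ q.edges, e ∈ p.edges) ∧
      q.support ⊆ p.support ∧ ∀ n, l ≤ n → n ≤ m → p.getVert n ∈ q.support := by
  have hend : (p.drop l).getVert (m - l) = p.getVert m := by
    rw [drop_getVert, Nat.add_sub_cancel' hlm]
  refine ⟨((p.drop l).take (m - l)).copy rfl hend, ?_, ?_, ?_, ?_⟩
  · exact (isPath_copy _ _ _).2 ((hp.drop l).take _)
  · intro e he
    rw [edges_copy, edges_take, edges_drop] at he
    exact List.drop_subset _ _ (List.take_subset _ _ he)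
  · intro x hx
    rw [support_copy, support_take, drop_support_eq_support_drop_min] at hx
    exact List.drop_subset _ _ (List.take_subset _ _ hx)
  · intro n hln hnm
    rw [support_copy]
    convert getVert_mem_support _ (n - l) using 1
    rw [take_getVert, drop_getVert, min_eq_right (by omega), Nat.add_sub_cancel' hln]

theorem IsPath.exists_isPath_getVert (hp : p.IsPath) (l m : ℕ) :
    ∃ q : T.Walk (p.getVert l) (p.getVert m), q.IsPath ∧ (∀ e ∈ q.edges, e ∈ p.edges) ∧
      q.support ⊆ p.support ∧ ∀ n, min l m ≤ n → n ≤ max l m → p.getVert n ∈ q.support := by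
  rcases le_total l m with hlm | hml
  · simpa [hlm] using hp.exists_isPath_getVert_of_le hlm
  · obtain ⟨q, hq, hqe, hqs, hqn⟩ := hp.exists_isPath_getVert_of_le hml
    refine ⟨q.reverse, hq.reverse, by simpa using hqe, by simpa using hqs, ?_⟩
    simpa [hml] using hqn

end Walk

end SimpleGraph

namespace MinBisection

open SimpleGraph Walk

section Blocks

variable {α : Type*} (P : ℕ → Set α) (n k : ℕ)

/-- With `P = pathBlock X p` and `n` the number of nodes of `p`, this is `A⁻` (and
`blocksAbove` is `A⁺`) for the node at position `k`. -/
def blocksBelow : Set α := {x | ∃ (l : ℕ) (_ : l < n), l < k ∧ x ∈ P l}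

def blocksAbove : Set α := {x | ∃ (l : ℕ) (_ : l < n), k < l ∧ x ∈ P l}

variable {P n k}

theorem partition_of_blocks (hk : k < n) (hcover : ∀ x, ∃ l < n, x ∈ P l)
    (huniq : ∀ {x l m}, l < n → m < n → x ∈ P l → x ∈ P m → l = m) {R S : Set α}
    (hRS : P k = R ∪ S) (hdisj : Disjoint R S) :
    R ∪ S ∪ blocksBelow P n k ∪ blocksAbove P n k = Set.univ ∧ Disjoint R S ∧
      Disjoint R (blocksBelow P n k) ∧ Disjoint R (blocksAbove P n k) ∧
      Disjoint S (blocksBelow P n k) ∧ Disjoint S (blocksAbove P n k) ∧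
      Disjoint (blocksBelow P n k) (blocksAbove P n k) := by
  have hR : R ⊆ P k := hRS ▸ Set.subset_union_left
  have hS : S ⊆ P k := hRS ▸ Set.subset_union_right
  have hbelow : Disjoint (P k) (blocksBelow P n k) := Set.disjoint_left.2
    fun x hxk ⟨l, hl, hlk, hxl⟩ => hlk.ne (huniq hl hk hxl hxk)
  have habove : Disjoint (P k) (blocksAbove P n k) := Set.disjoint_left.2
    fun x hxk ⟨l, hl, hkl, hxl⟩ => hkl.ne (huniq hk hl hxk hxl)
  refine ⟨Set.eq_univ_of_forall fun x => ?_, hdisj, hbelow.mono_left hR,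
    habove.mono_left hR, hbelow.mono_left hS, habove.mono_left hS, Set.disjoint_left.2
    fun x ⟨l, hl, hlk, hxl⟩ ⟨m, hm, hkm, hxm⟩ => (hlk.trans hkm).ne (huniq hl hm hxl hxm)⟩
  obtain ⟨l, hl, hxl⟩ := hcover x
  rcases lt_trichotomy l k with hlk | rfl | hkl
  · exact .inl (.inr ⟨l, hl, hlk, hxl⟩)
  · exact .inl (.inl (hRS ▸ hxl))
  · exact .inr ⟨l, hl, hkl, hxl⟩

end Blocks

variable {V ι : Type*} {G : SimpleGraph V} {T : SimpleGraph ι} {X : ι → Finset V} {a b : ι}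
  {p : T.Walk a b}

/-- `T - E(P)`: its connected components are the subtrees `T_i` of the paper. -/
abbrev offPath (p : T.Walk a b) : SimpleGraph ι := T.deleteEdges {e | e ∈ p.edges}

theorem offPath_reachable_iff {i j : ι} :
    (offPath p).Reachable i j ↔ ∃ q : T.Walk i j, ∀ e ∈ q.edges, e ∉ p.edges := by
  refine ⟨fun ⟨w⟩ => ⟨w.mapLe (deleteEdges_le _), fun e he => ?_⟩,
    fun ⟨q, hq⟩ => (q.toDeleteEdges _ hq).reachable⟩
  rw [edges_mapLe_eq_edges] at he
  have := w.edges_subset_edgeSet he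
  rw [edgeSet_deleteEdges] at this
  exact this.2

theorem exists_offPath_reachable_getVert (hT : T.Preconnected) (p : T.Walk a b) (j : ι) :
    ∃ l ≤ p.length, (offPath p).Reachable (p.getVert l) j := by
  suffices ∀ {c} (w : T.Walk j c), (∃ l ≤ p.length, (offPath p).Reachable (p.getVert l) c) →
      ∃ l ≤ p.length, (offPath p).Reachable (p.getVert l) j from
    this (hT j a).some ⟨0, Nat.zero_le _, by rw [getVert_zero]⟩
  intro c w
  induction w with
  | nil => exact id
  | @cons j d c hjd w ih =>
    intro hc
    obtain ⟨l, hl, hld⟩ := ih hc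
    by_cases hp : s(j, d) ∈ p.edges
    · obtain ⟨n, rfl, hn⟩ := mem_support_iff_exists_getVert.1 (p.fst_mem_support_of_mem_edges hp)
      exact ⟨n, hn, .rfl⟩
    · refine ⟨l, hl, hld.trans (Adj.reachable ?_)⟩
      rw [deleteEdges_adj, Sym2.eq_swap]
      exact ⟨hjd.symm, hp⟩

theorem eq_of_offPath_reachable_getVert (hT : T.IsAcyclic) (hp : p.IsPath) {l m : ℕ}
    (hl : l ≤ p.length) (hm : m ≤ p.length)
    (h : (offPath p).Reachable (p.getVert l) (p.getVert m)) : l = m := by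
  obtain ⟨q, hq, hqe, -, -⟩ := hp.exists_isPath_getVert l m
  exact hp.getVert_injOn hl hm (hT.eq_of_isPath_of_reachable_deleteEdges hq hqe h)

/-- The tree path from `p.getVert l` to `h` is the segment of `p` up to `p.getVert s` followed
by a path inside `T_{p.getVert s}`, so (T3) applies to it. -/
theorem mem_getVert_of_between (hTD : IsTreeDecomp G T X) (hp : p.IsPath) {l s m : ℕ}
    {h : ι} (hh : (offPath p).Reachable (p.getVert s) h) (hs : s ≤ p.length) {x : V}
    (hxl : x ∈ X (p.getVert l)) (hxh : x ∈ X h) (hlm : min l s ≤ m) (hms : m ≤ max l s) :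
    x ∈ X (p.getVert m) := by
  obtain ⟨q, hq, -, hqp, hqm⟩ := hp.exists_isPath_getVert l s
  obtain ⟨w⟩ := hh
  set π := w.bypass.mapLe (deleteEdges_le _)
  have hπ : π.IsPath := w.bypass_isPath.mapLe _
  have hdisj : ∀ y ∈ q.support, y ∉ π.support.tail := by
    intro y hyq hyπ
    obtain ⟨n, rfl, hn⟩ := mem_support_iff_exists_getVert.1 (hqp hyq)
    have hyw : p.getVert n ∈ w.bypass.support := by
      rw [← support_mapLe_eq_support (deleteEdges_le _)]
      exact List.mem_of_mem_tail hyπ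
    obtain rfl : n = s := eq_of_offPath_reachable_getVert hTD.isTree.2 hp hn hs
      (w.bypass.takeUntil _ hyw).reachable.symm
    have := hπ.support_nodup
    rw [← π.cons_tail_support] at this
    exact (List.nodup_cons.1 this).1 hyπ
  have hqπ : (q.append π).IsPath := by
    rw [isPath_def, support_append]
    exact hq.support_nodup.append hπ.support_nodup.tail hdisj
  exact hTD.inter_subset _ hqπ _ (support_subset_support_append_left _ _ (hqm m hlm hms))
    (Finset.mem_inter.2 ⟨hxl, hxh⟩)

theorem offPath_reachable_of_mem_of_mem (hTD : IsTreeDecomp G T X) {x : V} {j h : ι}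
    (hxj : x ∈ X j) (hxh : x ∈ X h) (hxp : ∀ n ∈ p.support, x ∉ X n) :
    (offPath p).Reachable j h := by
  obtain ⟨w⟩ := hTD.isTree.1.preconnected j h
  refine offPath_reachable_iff.2 ⟨w.bypass, fun e he hep => ?_⟩
  induction e using Sym2.ind with
  | _ y z =>
    exact hxp y (p.fst_mem_support_of_mem_edges hep) (hTD.inter_subset _ w.bypass_isPath y
      (w.bypass.fst_mem_support_of_mem_edges he) (Finset.mem_inter.2 ⟨hxj, hxh⟩))

theorem eq_of_mem_Sset_of_offPath_reachable (hTD : IsTreeDecomp G T X) (hp : p.IsPath)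
    {l s : ℕ} (hl : l ≤ p.length) (hs : s ≤ p.length) {x : V} {h : ι}
    (hx : x ∈ Sset X p (p.getVert l)) (hxh : x ∈ X h)
    (hh : (offPath p).Reachable (p.getVert s) h) : l = s := by
  obtain ⟨⟨j, hj, hxj⟩, hxp⟩ := hx
  exact eq_of_offPath_reachable_getVert hTD.isTree.2 hp hl hs
    ((offPath_reachable_iff.2 hj).trans ((offPath_reachable_of_mem_of_mem hTD hxj hxh hxp).trans
      hh.symm))

theorem Rset_subset (i : ι) : Rset X p i ⊆ X i :=
  fun _ ⟨_, _, _, hx, _⟩ => hx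

theorem mem_Rset_getVert_of_forall_lt {l : ℕ} (hl : l ≤ p.length) {x : V}
    (hx : x ∈ X (p.getVert l)) (hlt : ∀ m < l, x ∉ X (p.getVert m)) :
    x ∈ Rset X p (p.getVert l) :=
  ⟨l, by rw [length_support]; omega, support_get_eq_getVert .., hx,
    fun m hml => by rw [support_get_eq_getVert]; exact hlt m hml⟩

theorem notMem_of_mem_Rset_getVert (hp : p.IsPath) {l : ℕ} (hl : l ≤ p.length) {x : V}
    (hx : x ∈ Rset X p (p.getVert l)) {m : ℕ} (hml : m < l) : x ∉ X (p.getVert m) := by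
  obtain ⟨k, hk, hkl, -, hlt⟩ := hx
  rw [support_get_eq_getVert] at hkl
  obtain rfl : k = l := hp.getVert_injOn (by simpa using hk) hl hkl
  simpa only [support_get_eq_getVert] using hlt m hml

def pathBlock (X : ι → Finset V) (p : T.Walk a b) (l : ℕ) : Set V :=
  Rset X p (p.getVert l) ∪ Sset X p (p.getVert l)

theorem exists_mem_pathBlock (hTD : IsTreeDecomp G T X) (p : T.Walk a b) (x : V) :
    ∃ l ≤ p.length, x ∈ pathBlock X p l := by
  by_cases hR : ∃ m, m ≤ p.length ∧ x ∈ X (p.getVert m)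
  · obtain ⟨hl, hx⟩ := Nat.find_spec hR
    refine ⟨Nat.find hR, hl, .inl (mem_Rset_getVert_of_forall_lt hl hx fun m hm hxm => ?_)⟩
    exact Nat.find_min hR hm ⟨by omega, hxm⟩
  · push Not at hR
    have hxp : ∀ n ∈ p.support, x ∉ X n := by
      intro n hn
      obtain ⟨m, rfl, hm⟩ := mem_support_iff_exists_getVert.1 hn
      exact hR m hm
    obtain ⟨j, hxj⟩ := hTD.mem_cluster x
    obtain ⟨l, hl, hlj⟩ := exists_offPath_reachable_getVert hTD.isTree.1.preconnected p j
    exact ⟨l, hl, .inr ⟨⟨j, offPath_reachable_iff.1 hlj, hxj⟩, hxp⟩⟩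

theorem eq_of_mem_pathBlock (hTD : IsTreeDecomp G T X) (hp : p.IsPath) {l m : ℕ}
    (hl : l ≤ p.length) (hm : m ≤ p.length) {x : V} (hxl : x ∈ pathBlock X p l)
    (hxm : x ∈ pathBlock X p m) : l = m := by
  rcases hxl with hRl | hSl <;> rcases hxm with hRm | hSm
  · by_contra hne
    rcases Nat.lt_or_gt_of_ne hne with hlm | hml
    · exact notMem_of_mem_Rset_getVert hp hm hRm hlm (Rset_subset _ hRl)
    · exact notMem_of_mem_Rset_getVert hp hl hRl hml (Rset_subset _ hRm)
  · exact absurd (Rset_subset _ hRl) (hSm.2 _ (p.getVert_mem_support l))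
  · exact absurd (Rset_subset _ hRm) (hSl.2 _ (p.getVert_mem_support m))
  · obtain ⟨⟨j, hj, hxj⟩, -⟩ := hSm
    exact eq_of_mem_Sset_of_offPath_reachable hTD hp hl hm hSl hxj (offPath_reachable_iff.2 hj)

theorem disjoint_Rset_Sset_getVert (l : ℕ) :
    Disjoint (Rset X p (p.getVert l)) (Sset X p (p.getVert l)) :=
  Set.disjoint_left.2 fun _ hR hS => hS.2 _ (p.getVert_mem_support l) (Rset_subset _ hR)

theorem pathBlock_same_side (hTD : IsTreeDecomp G T X) (hp : p.IsPath) {l s k : ℕ}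
    (hl : l ≤ p.length) (hs : s ≤ p.length) {h : ι}
    (hh : (offPath p).Reachable (p.getVert s) h) {x : V} (hxh : x ∈ X h)
    (hxk : x ∉ X (p.getVert k)) (hxl : x ∈ pathBlock X p l) :
    (l < k ↔ s < k) ∧ (k < l ↔ k < s) := by
  rcases hxl with hR | hS
  · have hlk : l ≠ k := by rintro rfl; exact hxk (Rset_subset _ hR)
    have : ¬ (min l s ≤ k ∧ k ≤ max l s) := fun ⟨hlk, hks⟩ =>
      hxk (mem_getVert_of_between hTD hp hh hs (Rset_subset _ hR) hxh hlk hks)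
    omega
  · obtain rfl := eq_of_mem_Sset_of_offPath_reachable hTD hp hl hs hS hxh hh
    exact ⟨.rfl, .rfl⟩

theorem mem_Sset_or_blocks_of_offPath_reachable (hTD : IsTreeDecomp G T X) (hp : p.IsPath)
    {s k : ℕ} (hs : s ≤ p.length) {h : ι} (hh : (offPath p).Reachable (p.getVert s) h) {x : V}
    (hxh : x ∈ X h) (hxk : x ∉ X (p.getVert k)) :
    (s < k → x ∈ blocksBelow (pathBlock X p) p.support.length k) ∧
      (s = k → x ∈ Sset X p (p.getVert k)) ∧
      (k < s → x ∈ blocksAbove (pathBlock X p) p.support.length k) := by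
  have hN := p.length_support
  obtain ⟨l, hl, hxl⟩ := exists_mem_pathBlock hTD p x
  have hside := pathBlock_same_side hTD hp hl hs hh hxh hxk hxl
  refine ⟨fun hsk => ⟨l, by omega, by omega, hxl⟩, fun hsk => ?_,
    fun hsk => ⟨l, by omega, by omega, hxl⟩⟩
  obtain rfl : l = k := by omega
  exact hxl.resolve_left fun hR => hxk (Rset_subset _ hR)

theorem adj_mem_Sset_or_blocks (hTD : IsTreeDecomp G T X) (hp : p.IsPath) (k : ℕ) {u v : V}
    (huv : G.Adj u v) (hu : u ∉ X (p.getVert k)) (hv : v ∉ X (p.getVert k)) :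
    (u ∈ Sset X p (p.getVert k) ∧ v ∈ Sset X p (p.getVert k)) ∨
      (u ∈ blocksBelow (pathBlock X p) p.support.length k ∧
        v ∈ blocksBelow (pathBlock X p) p.support.length k) ∨
      (u ∈ blocksAbove (pathBlock X p) p.support.length k ∧
        v ∈ blocksAbove (pathBlock X p) p.support.length k) := by
  obtain ⟨h, huh, hvh⟩ := hTD.edge_cluster huv
  obtain ⟨s, hs, hsh⟩ := exists_offPath_reachable_getVert hTD.isTree.1.preconnected p h
  obtain ⟨hu₁, hu₂, hu₃⟩ := mem_Sset_or_blocks_of_offPath_reachable hTD hp hs hsh huh hu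
  obtain ⟨hv₁, hv₂, hv₃⟩ := mem_Sset_or_blocks_of_offPath_reachable hTD hp hs hsh hvh hv
  rcases lt_trichotomy s k with hsk | hsk | hsk
  · exact .inr (.inl ⟨hu₁ hsk, hv₁ hsk⟩)
  · exact .inl ⟨hu₂ hsk, hv₂ hsk⟩
  · exact .inr (.inr ⟨hu₃ hsk, hv₃ hsk⟩)

end MinBisection

theorem MinBisection.cut_P_labeling_general {V ι : Type*}
    (G : SimpleGraph V) (T : SimpleGraph ι) (X : ι → Finset V)
    (hTD : IsTreeDecomp G T X) {i₀ j₀ : ι} (p : T.Walk i₀ j₀) (hp : p.IsPath)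
    (k : ℕ) (hk : k < p.support.length) (i : ι) (hi : p.support.get ⟨k, hk⟩ = i)
    (Am Ap : Set V)
    (hAm : Am = {x | ∃ (l : ℕ) (hl : l < p.support.length), l < k ∧
      x ∈ Rset X p (p.support.get ⟨l, hl⟩) ∪ Sset X p (p.support.get ⟨l, hl⟩)})
    (hAp : Ap = {x | ∃ (l : ℕ) (hl : l < p.support.length), k < l ∧
      x ∈ Rset X p (p.support.get ⟨l, hl⟩) ∪ Sset X p (p.support.get ⟨l, hl⟩)}) :
    (Rset X p i ∪ Sset X p i ∪ Am ∪ Ap = Set.univ) ∧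
    Disjoint (Rset X p i) (Sset X p i) ∧
    Disjoint (Rset X p i) Am ∧ Disjoint (Rset X p i) Ap ∧
    Disjoint (Sset X p i) Am ∧ Disjoint (Sset X p i) Ap ∧ Disjoint Am Ap ∧
    (∀ x ∈ Rset X p i, ∀ y : V, G.Adj x y → x ∈ X i ∨ y ∈ X i) ∧
    (∀ u v : V, G.Adj u v → u ∉ X i → v ∉ X i →
      ((u ∈ Sset X p i ∧ v ∈ Sset X p i) ∨ (u ∈ Am ∧ v ∈ Am) ∨ (u ∈ Ap ∧ v ∈ Ap))) := by
  have hN := p.length_support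
  simp only [SimpleGraph.Walk.support_get_eq_getVert] at hi hAm hAp
  subst hi hAm hAp
  obtain ⟨hcover, hRS, hRAm, hRAp, hSAm, hSAp, hAmAp⟩ := partition_of_blocks hk
    (fun x => (exists_mem_pathBlock hTD p x).imp fun _ ⟨hl, hx⟩ => ⟨by omega, hx⟩)
    (fun hl hm => eq_of_mem_pathBlock hTD hp (by omega) (by omega)) rfl
    (disjoint_Rset_Sset_getVert k)
  exact ⟨hcover, hRS, hRAm, hRAp, hSAm, hSAp, hAmAp, fun x hx _ _ => .inl (Rset_subset _ hx),
    fun u v huv => adj_mem_Sset_or_blocks hTD hp k huv⟩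

/-- Let `(T, X)` be a tree decomposition of `G` and `P ⊆ T` a path with a
nonredundant end `i₀`. Fix a node `i` on `P` (at position `k`) and let `A⁻` and `A⁺` be the
unions of the sets `R_j ∪ S_j` over the nodes `j` before, respectively after, `i` on `P`.
Then `R_i`, `S_i`, `A⁻`, `A⁺` partition `V(G)`, every vertex of `R_i` is isolated in
`G - E_G(i)`, and no edge of `G - E_G(i)` joins two distinct sets among `S_i, A⁻, A⁺`. -/
theorem MinBisection.cut_P_labeling {V ι : Type*} [Fintype V] [Fintype ι]
    (G : SimpleGraph V) (T : SimpleGraph ι) (X : ι → Finset V)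
    (hTD : IsTreeDecomp G T X) {i₀ j₀ : ι} (p : T.Walk i₀ j₀) (hp : p.IsPath)
    (hne : X i₀ ≠ ∅) (hnr : List.Chain' (fun a b => ¬ X b ⊆ X a) p.support)
    (k : ℕ) (hk : k < p.support.length) (i : ι) (hi : p.support.get ⟨k, hk⟩ = i)
    (Am Ap : Set V)
    (hAm : Am = {x | ∃ (l : ℕ) (hl : l < p.support.length), l < k ∧
      x ∈ Rset X p (p.support.get ⟨l, hl⟩) ∪ Sset X p (p.support.get ⟨l, hl⟩)})
    (hAp : Ap = {x | ∃ (l : ℕ) (hl : l < p.support.length), k < l ∧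
      x ∈ Rset X p (p.support.get ⟨l, hl⟩) ∪ Sset X p (p.support.get ⟨l, hl⟩)}) :
    (Rset X p i ∪ Sset X p i ∪ Am ∪ Ap = Set.univ) ∧
    Disjoint (Rset X p i) (Sset X p i) ∧
    Disjoint (Rset X p i) Am ∧ Disjoint (Rset X p i) Ap ∧
    Disjoint (Sset X p i) Am ∧ Disjoint (Sset X p i) Ap ∧ Disjoint Am Ap ∧
    (∀ x ∈ Rset X p i, ∀ y : V, G.Adj x y → x ∈ X i ∨ y ∈ X i) ∧
    (∀ u v : V, G.Adj u v → u ∉ X i → v ∉ X i →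
      ((u ∈ Sset X p i ∧ v ∈ Sset X p i) ∨ (u ∈ Am ∧ v ∈ Am) ∨ (u ∈ Ap ∧ v ∈ Ap))) :=
  MinBisection.cut_P_labeling_general G T X hTD p hp k hk i hi Am Ap hAm hAp
end

section
/- Every tree T on n vertices with maximum degree Δ satisfies MinBis(T) ≤ Δ·log₂ n. -/
open scoped Classical

section Aux
open SimpleGraph Finset

variable {V : Type*}

/-- there is a walk from x to y with support inside S -/
def WalkIn (G : SimpleGraph V) (S : Finset V) (x y : V) : Prop :=
  ∃ p : G.Walk x y, ∀ z ∈ p.support, z ∈ S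

namespace WalkIn

variable {G : SimpleGraph V} {S S' : Finset V} {x y z : V}

lemma left_mem (h : WalkIn G S x y) : x ∈ S := by
  obtain ⟨p, hp⟩ := h; exact hp _ p.start_mem_support

lemma right_mem (h : WalkIn G S x y) : y ∈ S := by
  obtain ⟨p, hp⟩ := h; exact hp _ p.end_mem_support

lemma refl (hx : x ∈ S) : WalkIn G S x x :=
  ⟨SimpleGraph.Walk.nil, by simp [hx]⟩

lemma symm (h : WalkIn G S x y) : WalkIn G S y x := by
  obtain ⟨p, hp⟩ := h
  exact ⟨p.reverse, by simpa using hp⟩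

lemma trans (h : WalkIn G S x y) (h' : WalkIn G S y z) : WalkIn G S x z := by
  obtain ⟨p, hp⟩ := h; obtain ⟨q, hq⟩ := h'
  refine ⟨p.append q, fun w hw => ?_⟩
  rcases (SimpleGraph.Walk.mem_support_append_iff _ _).1 hw with h | h
  exacts [hp _ h, hq _ h]

lemma mono (hS : S ⊆ S') (h : WalkIn G S x y) : WalkIn G S' x y := by
  obtain ⟨p, hp⟩ := h; exact ⟨p, fun z hz => hS (hp z hz)⟩

lemma adj (hadj : G.Adj x y) (hx : x ∈ S) (hy : y ∈ S) : WalkIn G S x y := by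
  refine ⟨SimpleGraph.Walk.cons hadj SimpleGraph.Walk.nil, ?_⟩
  intro z hz
  simp only [SimpleGraph.Walk.support_cons, SimpleGraph.Walk.support_nil,
    List.mem_cons, List.mem_singleton, List.not_mem_nil, or_false] at hz
  rcases hz with rfl | rfl
  exacts [hx, hy]

end WalkIn

/-- the connected component of `x` within `S` -/
noncomputable def Comp (G : SimpleGraph V) (S : Finset V) (x : V) : Finset V :=
  S.filter (fun y => WalkIn G S x y)

namespace Comp

variable {G : SimpleGraph V} {S : Finset V} {x y z : V}

lemma mem_iff : y ∈ Comp G S x ↔ y ∈ S ∧ WalkIn G S x y := by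
  simp [Comp]

lemma subset : Comp G S x ⊆ S := Finset.filter_subset _ _

lemma self_mem (hx : x ∈ S) : x ∈ Comp G S x := mem_iff.2 ⟨hx, WalkIn.refl hx⟩

lemma eq_of_mem (hy : y ∈ Comp G S x) : Comp G S y = Comp G S x := by
  obtain ⟨hyS, hxy⟩ := mem_iff.1 hy
  ext z
  simp only [mem_iff]
  exact ⟨fun ⟨hz, h⟩ => ⟨hz, hxy.trans h⟩, fun ⟨hz, h⟩ => ⟨hz, hxy.symm.trans h⟩⟩

/-- a walk within `S` from `x` stays within the component of `x` -/
lemma walkIn_self (h : WalkIn G S x y) : WalkIn G (Comp G S x) x y := by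
  obtain ⟨p, hp⟩ := h
  refine ⟨p, fun z hz => mem_iff.2 ⟨hp z hz, ?_⟩⟩
  exact ⟨p.takeUntil z hz, fun w hw => hp w (p.support_takeUntil_subset hz hw)⟩

lemma connected (hz : z ∈ Comp G S x) (hy : y ∈ Comp G S x) :
    WalkIn G (Comp G S x) z y := by
  have h1 := walkIn_self (mem_iff.1 hz).2
  have h2 := walkIn_self (mem_iff.1 hy).2
  exact h1.symm.trans h2

end Comp

section Tree

variable {G : SimpleGraph V} {x y z u v w : V}

/-- In a tree, if some path from x to y passes through u, every walk does. -/
lemma tree_sep (hT : G.IsTree) {p : G.Walk x y} (hp : p.IsPath) (hu : u ∈ p.support)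
    (q : G.Walk x y) : u ∈ q.support := by
  have := hT.IsAcyclic.path_unique ⟨p, hp⟩ q.toPath
  have : p = q.toPath.1 := congrArg Subtype.val this
  exact q.support_toPath_subset (this ▸ hu)

/-- decompose a walk in S from v ≠ z into first edge plus the rest, as a path. -/
lemma exists_first_step (hvz : v ≠ z) (h : WalkIn G S v z) :
    ∃ (u : V) (_ : G.Adj v u) (q : G.Walk u z), q.IsPath ∧ v ∉ q.support ∧
      (∀ w ∈ q.support, w ∈ S) ∧ (SimpleGraph.Walk.cons ‹G.Adj v u› q).IsPath := by
  obtain ⟨p0, hp0⟩ := h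
  have hsupp : ∀ w ∈ p0.toPath.1.support, w ∈ S := fun w hw =>
    hp0 w (p0.support_toPath_subset hw)
  have hpath : p0.toPath.1.IsPath := p0.toPath.2
  cases hq : p0.toPath.1 with
  | nil => exact absurd rfl hvz
  | cons hadj q =>
    rw [hq] at hpath hsupp
    rw [SimpleGraph.Walk.cons_isPath_iff] at hpath
    exact ⟨_, hadj, q, hpath.1, hpath.2, fun w hw => hsupp w (by simp [hw]),
      (SimpleGraph.Walk.cons_isPath_iff _ _).2 hpath⟩

end Tree

section Centroid

variable {G : SimpleGraph V}

lemma centroid (hT : G.IsTree) (C : Finset V)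
    (hconn : ∀ x ∈ C, ∀ y ∈ C, WalkIn G C x y) (hne : C.Nonempty) :
    ∃ v ∈ C, ∀ z ∈ C.erase v, 2 * (Comp G (C.erase v) z).card ≤ C.card := by
  classical
  set f : V → ℕ := fun v => (C.erase v).sup (fun z => (Comp G (C.erase v) z).card) with hf
  obtain ⟨v, hvC, hvmin⟩ := C.exists_min_image f hne
  refine ⟨v, hvC, fun z hz => ?_⟩
  by_contra hbig
  push_neg at hbig
  set D := Comp G (C.erase v) z with hD
  have hzD : z ∈ D := Comp.self_mem hz
  have hDsub : D ⊆ C.erase v := Comp.subset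
  have hzC : z ∈ C := Finset.mem_of_mem_erase hz
  have hvz : v ≠ z := fun h => (Finset.ne_of_mem_erase hz) h.symm
  obtain ⟨u, hadj, q, hq, hvq, hqS, hcons⟩ := exists_first_step hvz (hconn v hvC z hzC)
  have hqCe : ∀ w ∈ q.support, w ∈ C.erase v := fun w hw =>
    Finset.mem_erase.2 ⟨fun h => hvq (h ▸ hw), hqS w hw⟩
  have huD : u ∈ D := Comp.mem_iff.2
    ⟨hqCe u q.start_mem_support, (WalkIn.symm ⟨q, hqCe⟩ : WalkIn G _ z u)⟩
  have huC : u ∈ C := (Finset.mem_erase.1 (hDsub huD)).2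
  have hneq_uv : u ≠ v := (Finset.mem_erase.1 (hDsub huD)).1
  -- Claim 0: any neighbor of v lying in D equals u
  have claim0 : ∀ w, G.Adj v w → w ∈ D → w = u := by
    intro w hvw hwD
    have hwalk : WalkIn G (C.erase v) u w :=
      ((Comp.mem_iff.1 huD).2).symm.trans (Comp.mem_iff.1 hwD).2
    obtain ⟨P0, hP0⟩ := hwalk
    have hvP : v ∉ P0.toPath.1.support := fun h =>
      (Finset.mem_erase.1 (hP0 v (P0.support_toPath_subset h))).1 rfl
    have hpath1 : (SimpleGraph.Walk.cons hadj P0.toPath.1).IsPath :=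
      (SimpleGraph.Walk.cons_isPath_iff _ _).2 ⟨P0.toPath.2, hvP⟩
    have huniq := hT.IsAcyclic.path_unique ⟨_, hpath1⟩ (SimpleGraph.Path.singleton hvw)
    have hsupp := congrArg (fun p : G.Path v w => p.1.support) huniq
    simp only [SimpleGraph.Path.singleton, SimpleGraph.Walk.support_cons,
      SimpleGraph.Walk.support_nil] at hsupp
    have hcons2 := P0.toPath.1.support_eq_cons
    simp only [List.cons.injEq] at hsupp
    rw [hsupp.2] at hcons2
    have : w = u := by injection hcons2
    exact this
  -- Claim 2: no vertex of D other than u is reachable from v in C.erase u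
  have claim2 : ∀ w ∈ D, w ≠ u → ¬ WalkIn G (C.erase u) v w := by
    intro w hwD hwu hcontra
    have hwC : w ∈ C := (Finset.mem_erase.1 (hDsub hwD)).2
    have hvw : v ≠ w := fun h => (Finset.mem_erase.1 (hDsub hwD)).1 h.symm
    obtain ⟨u', hadj', q', hq', hvq', hq'S, hcons'⟩ :=
      exists_first_step hvw (hconn v hvC w hwC)
    have hq'Ce : ∀ t ∈ q'.support, t ∈ C.erase v := fun t ht =>
      Finset.mem_erase.2 ⟨fun h => hvq' (h ▸ ht), hq'S t ht⟩
    have hu'D : u' ∈ D := by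
      have h1 : WalkIn G (C.erase v) u' w := ⟨q', hq'Ce⟩
      have h2 : WalkIn G (C.erase v) z w := (Comp.mem_iff.1 hwD).2
      exact Comp.mem_iff.2 ⟨hq'Ce u' q'.start_mem_support, h2.trans h1.symm⟩
    have hu'u : u' = u := claim0 u' hadj' hu'D
    obtain ⟨Q, hQ⟩ := hcontra
    have hu_mem : u ∈ (SimpleGraph.Walk.cons hadj' q').support := by
      rw [SimpleGraph.Walk.support_cons]
      exact List.mem_cons_of_mem _ (hu'u ▸ q'.start_mem_support)
    have := tree_sep hT hcons' hu_mem Q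
    exact (Finset.mem_erase.1 (hQ u this)).1 rfl
  -- Claim 1: every vertex of C outside D (other than u) is reachable from v in C.erase u
  have claim1 : ∀ w ∈ C, w ∉ D → w ≠ u → WalkIn G (C.erase u) v w := by
    intro w hwC hwD hwu
    by_cases hwv : w = v
    · subst hwv
      exact WalkIn.refl (Finset.mem_erase.2 ⟨fun h => hneq_uv h.symm, hwC⟩)
    obtain ⟨P0, hP0⟩ := hconn v hvC w hwC
    set P := P0.toPath.1 with hPdef
    have hP : P.IsPath := P0.toPath.2
    have hPsupp : ∀ t ∈ P.support, t ∈ C := fun t ht => hP0 t (P0.support_toPath_subset ht)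
    have huP : u ∉ P.support := by
      intro hu
      have hnodup : P.support.Nodup := hP.support_nodup
      have hspec := P.take_spec hu
      rw [← hspec, SimpleGraph.Walk.support_append] at hnodup
      have hvtake : v ∈ (P.takeUntil u hu).support := SimpleGraph.Walk.start_mem_support _
      have hvtail : v ∉ (P.dropUntil u hu).support.tail :=
        fun h => (List.disjoint_of_nodup_append hnodup) hvtake h
      have hvr : v ∉ (P.dropUntil u hu).support := by
        rw [SimpleGraph.Walk.support_eq_cons]
        intro h
        rcases List.mem_cons.1 h with h | h
        · exact hneq_uv h.symm
        · exact hvtail h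
      have hwD' : w ∈ D := by
        have hwalk : WalkIn G (C.erase v) u w :=
          ⟨P.dropUntil u hu, fun t ht => Finset.mem_erase.2
            ⟨fun hh => hvr (hh ▸ ht), hPsupp t (P.support_dropUntil_subset hu ht)⟩⟩
        rw [hD, ← Comp.eq_of_mem huD]
        exact Comp.mem_iff.2 ⟨hwalk.right_mem, hwalk⟩
      exact hwD hwD'
    exact ⟨P, fun t ht => Finset.mem_erase.2 ⟨fun hh => huP (hh ▸ ht), hPsupp t ht⟩⟩
  -- bound f u
  have hDcard : 1 ≤ D.card := Finset.card_pos.2 ⟨z, hzD⟩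
  have hfv : D.card ≤ f v := Finset.le_sup (f := fun z => (Comp G (C.erase v) z).card) hz
  have hDC : D.card ≤ C.card := Finset.card_le_card (hDsub.trans (Finset.erase_subset _ _))
  have hfu : f u ≤ D.card - 1 := by
    apply Finset.sup_le
    intro w hw
    have hwu : w ≠ u := (Finset.mem_erase.1 hw).1
    have hwC : w ∈ C := (Finset.mem_erase.1 hw).2
    by_cases hwD : w ∈ D
    · have hsub : Comp G (C.erase u) w ⊆ D.erase u := by
        intro t ht
        obtain ⟨htCe, hwt⟩ := Comp.mem_iff.1 ht
        obtain ⟨Q, hQ⟩ := hwt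
        have hvQ : v ∉ Q.support := by
          intro hv
          have hwalkv : WalkIn G (C.erase u) w v :=
            ⟨Q.takeUntil v hv, fun s hs => hQ s (Q.support_takeUntil_subset hv hs)⟩
          exact claim2 w hwD hwu hwalkv.symm
        have htD : t ∈ D := by
          have hwalk : WalkIn G (C.erase v) w t :=
            ⟨Q, fun s hs => Finset.mem_erase.2
              ⟨fun hh => hvQ (hh ▸ hs), (Finset.mem_erase.1 (hQ s hs)).2⟩⟩
          rw [hD, ← Comp.eq_of_mem hwD]
          exact Comp.mem_iff.2 ⟨hwalk.right_mem, hwalk⟩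
        exact Finset.mem_erase.2 ⟨(Finset.mem_erase.1 htCe).1, htD⟩
      calc (Comp G (C.erase u) w).card ≤ (D.erase u).card := Finset.card_le_card hsub
        _ = D.card - 1 := Finset.card_erase_of_mem huD
    · have hsub : Comp G (C.erase u) w ⊆ C \ D := by
        intro t ht
        obtain ⟨htCe, hwt⟩ := Comp.mem_iff.1 ht
        refine Finset.mem_sdiff.2 ⟨(Finset.mem_erase.1 htCe).2, ?_⟩
        intro htD
        have h1 : WalkIn G (C.erase u) v w := claim1 w hwC hwD hwu
        have h2 : WalkIn G (C.erase u) v t := h1.trans hwt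
        exact claim2 t htD (Finset.mem_erase.1 htCe).1 h2
      have : (Comp G (C.erase u) w).card ≤ C.card - D.card := by
        calc (Comp G (C.erase u) w).card ≤ (C \ D).card := Finset.card_le_card hsub
          _ = C.card - D.card := Finset.card_sdiff_of_subset (hDsub.trans (Finset.erase_subset _ _))
      omega
  have := hvmin u huC
  omega

end Centroid

noncomputable def crossF (G : SimpleGraph V) (S B : Finset V) : Finset (V × V) :=
  (S ×ˢ S).filter fun p => G.Adj p.1 p.2 ∧ p.1 ∈ B ∧ p.2 ∉ B

noncomputable def maxDeg' (G : SimpleGraph V) [Fintype V] : ℕ :=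
  Finset.univ.sup fun v => Nat.card {u // G.Adj v u}

lemma filter_adj_card_le [Fintype V] (G : SimpleGraph V) (v : V) :
    (Finset.univ.filter fun a => G.Adj a v).card ≤ maxDeg' G := by
  have h1 : (Finset.univ.filter fun a => G.Adj a v) =
      (Finset.univ.filter fun a => G.Adj v a) := by
    ext a; simp [G.adj_comm]
  have h2 : Nat.card {u // G.Adj v u} = (Finset.univ.filter fun a => G.Adj v a).card := by
    rw [Nat.card_eq_fintype_card, Fintype.card_subtype]
  rw [h1, ← h2]
  exact Finset.le_sup (f := fun w => Nat.card {u // G.Adj w u}) (Finset.mem_univ v)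

lemma main_lemma [Fintype V] (G : SimpleGraph V) (hT : G.IsTree) (c : ℕ) :
    ∀ S : Finset V, (∀ x ∈ S, (Comp G S x).card ≤ c) →
    ∀ m, m ≤ S.card → ∃ B ⊆ S, B.card = m ∧
      (crossF G S B).card ≤ maxDeg' G * Nat.log 2 c := by
  induction c using Nat.strong_induction_on with
  | _ c ihc =>
  intro S
  induction S using Finset.strongInduction with
  | _ S ihS =>
  intro hcomp m hm
  rcases Nat.eq_zero_or_pos m with rfl | hm1
  · refine ⟨∅, Finset.empty_subset _, Finset.card_empty, ?_⟩
    have : crossF G S ∅ = ∅ := by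
      ext p; simp [crossF]
    simp [this]
  obtain ⟨x, hx⟩ : S.Nonempty := Finset.card_pos.1 (lt_of_lt_of_le hm1 hm)
  set C := Comp G S x with hC
  have hCsub : C ⊆ S := Comp.subset
  have hCx : x ∈ C := Comp.self_mem hx
  rcases le_or_gt C.card m with hCm | hmC
  · -- take the whole component and recurse on the rest
    set S' := S \ C with hS'
    have hss : S' ⊂ S := Finset.sdiff_ssubset hCsub ⟨x, hCx⟩
    have hcomp' : ∀ y ∈ S', (Comp G S' y).card ≤ c := by
      intro y hy
      have hsub : Comp G S' y ⊆ Comp G S y := by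
        intro t ht
        obtain ⟨htS, hwt⟩ := Comp.mem_iff.1 ht
        exact Comp.mem_iff.2 ⟨Finset.mem_sdiff.1 htS |>.1, hwt.mono Finset.sdiff_subset⟩
      exact le_trans (Finset.card_le_card hsub) (hcomp y (Finset.mem_sdiff.1 hy).1)
    have hcard' : m - C.card ≤ S'.card := by
      rw [hS', Finset.card_sdiff_of_subset hCsub]
      exact Nat.sub_le_sub_right hm _
    obtain ⟨B', hB'sub, hB'card, hB'cross⟩ := ihS S' hss hcomp' (m - C.card) hcard'
    have hdisj : Disjoint B' C := Finset.disjoint_of_subset_left hB'sub Finset.sdiff_disjoint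
    refine ⟨B' ∪ C, Finset.union_subset (hB'sub.trans Finset.sdiff_subset) hCsub, ?_, ?_⟩
    · rw [Finset.card_union_of_disjoint hdisj, hB'card]
      exact Nat.sub_add_cancel hCm
    · refine le_trans (Finset.card_le_card ?_) hB'cross
      intro p hp
      simp only [crossF, Finset.mem_filter, Finset.mem_product] at hp ⊢
      obtain ⟨⟨h1, h2⟩, hadj, hB, hnB⟩ := hp
      have hp1C : p.1 ∉ C := by
        intro hc1
        have : p.2 ∈ C := by
          rw [hC, ← Comp.eq_of_mem hc1]
          exact Comp.mem_iff.2 ⟨h2, WalkIn.adj hadj h1 h2⟩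
        exact hnB (Finset.mem_union_right _ this)
      have hp1B' : p.1 ∈ B' := (Finset.mem_union.1 hB).resolve_right hp1C
      have hp2 : p.2 ∈ S' := Finset.mem_sdiff.2 ⟨h2, fun hc => hnB (Finset.mem_union_right _ hc)⟩
      exact ⟨⟨hB'sub hp1B', hp2⟩, hadj, hp1B', fun hc => hnB (Finset.mem_union_left _ hc)⟩
  · -- split the component using a centroid
    have hCc : C.card ≤ c := hcomp x hx
    have hc2 : 2 ≤ c := by omega
    obtain ⟨v, hvC, hcent⟩ := centroid hT C (fun a ha b hb => Comp.connected ha hb) ⟨x, hCx⟩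
    set S'' := C.erase v with hS''
    have hcomp'' : ∀ y ∈ S'', (Comp G S'' y).card ≤ c / 2 := by
      intro y hy
      have := hcent y hy
      have h2 : 2 * (Comp G S'' y).card ≤ c := le_trans this hCc
      omega
    have hmS'' : m ≤ S''.card := by
      rw [hS'', Finset.card_erase_of_mem hvC]
      omega
    obtain ⟨B, hBsub, hBcard, hBcross⟩ :=
      ihc (c / 2) (Nat.div_lt_self (by omega) one_lt_two) S'' hcomp'' m hmS''
    refine ⟨B, hBsub.trans ((Finset.erase_subset _ _).trans hCsub), hBcard, ?_⟩
    have hsubun : crossF G S B ⊆ crossF G S'' B ∪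
        ((Finset.univ.filter fun a => G.Adj a v).image fun a => (a, v)) := by
      intro p hp
      simp only [crossF, Finset.mem_filter, Finset.mem_product] at hp
      obtain ⟨⟨h1, h2⟩, hadj, hB, hnB⟩ := hp
      have hp1C : p.1 ∈ C := (Finset.erase_subset _ _) (hBsub hB)
      by_cases h2v : p.2 = v
      · refine Finset.mem_union_right _ (Finset.mem_image.2 ⟨p.1, ?_, ?_⟩)
        · exact Finset.mem_filter.2 ⟨Finset.mem_univ _, h2v ▸ hadj⟩
        · exact Prod.ext rfl h2v.symm
      · refine Finset.mem_union_left _ ?_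
        have hp2C : p.2 ∈ C := by
          rw [hC, ← Comp.eq_of_mem hp1C]
          exact Comp.mem_iff.2 ⟨h2, WalkIn.adj hadj h1 h2⟩
        have hp2S'' : p.2 ∈ S'' := Finset.mem_erase.2 ⟨h2v, hp2C⟩
        simp only [crossF, Finset.mem_filter, Finset.mem_product]
        exact ⟨⟨hBsub hB, hp2S''⟩, hadj, hB, hnB⟩
    have hcard2 : (crossF G S B).card ≤ (crossF G S'' B).card + maxDeg' G := by
      calc (crossF G S B).card ≤ (crossF G S'' B ∪
            ((Finset.univ.filter fun a => G.Adj a v).image fun a => (a, v))).card :=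
            Finset.card_le_card hsubun
        _ ≤ (crossF G S'' B).card +
            ((Finset.univ.filter fun a => G.Adj a v).image fun a => (a, v)).card :=
            Finset.card_union_le _ _
        _ ≤ (crossF G S'' B).card + (Finset.univ.filter fun a => G.Adj a v).card := by
            exact Nat.add_le_add_left Finset.card_image_le _
        _ ≤ _ := Nat.add_le_add_left (filter_adj_card_le G v) _
    have hL : 1 ≤ Nat.log 2 c := Nat.log_pos one_lt_two hc2
    have hlog : Nat.log 2 (c / 2) = Nat.log 2 c - 1 := Nat.log_div_base 2 c
    calc (crossF G S B).card ≤ (crossF G S'' B).card + maxDeg' G := hcard2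
      _ ≤ maxDeg' G * (Nat.log 2 c - 1) + maxDeg' G * 1 := by
          rw [mul_one]; exact Nat.add_le_add_right (hlog ▸ hBcross) _
      _ = maxDeg' G * (Nat.log 2 c - 1 + 1) := by rw [Nat.mul_add]
      _ = maxDeg' G * Nat.log 2 c := by rw [Nat.sub_add_cancel hL]

lemma cutWidth_eq_crossF [Fintype V] (G : SimpleGraph V) (B : Finset V) :
    Nat.card {e : Sym2 V // ∃ x y, G.Adj x y ∧ x ∈ B ∧ y ∉ B ∧ e = s(x, y)} =
      (crossF G Finset.univ B).card := by
  classical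
  have himg : {e : Sym2 V | ∃ x y, G.Adj x y ∧ x ∈ B ∧ y ∉ B ∧ e = s(x, y)} =
      ↑((crossF G Finset.univ B).image fun p => s(p.1, p.2)) := by
    ext e
    simp only [Set.mem_setOf_eq, Finset.coe_image, Set.mem_image, Finset.mem_coe, crossF,
      Finset.mem_filter, Finset.mem_product, Finset.mem_univ, true_and]
    constructor
    · rintro ⟨x, y, h1, h2, h3, rfl⟩
      exact ⟨(x, y), ⟨h1, h2, h3⟩, rfl⟩
    · rintro ⟨⟨x, y⟩, ⟨h1, h2, h3⟩, rfl⟩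
      exact ⟨x, y, h1, h2, h3, rfl⟩
  have h1 : Nat.card {e : Sym2 V // ∃ x y, G.Adj x y ∧ x ∈ B ∧ y ∉ B ∧ e = s(x, y)} =
      Set.ncard {e : Sym2 V | ∃ x y, G.Adj x y ∧ x ∈ B ∧ y ∉ B ∧ e = s(x, y)} :=
    Nat.card_coe_set_eq _
  rw [h1, himg, Set.ncard_coe_finset]
  apply Finset.card_image_of_injOn
  intro p hp q hq heq
  simp only [crossF, Finset.mem_coe, Finset.mem_filter, Finset.mem_product] at hp hq
  rcases Sym2.eq_iff.1 heq with ⟨h1, h2⟩ | ⟨h1, h2⟩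
  · exact Prod.ext h1 h2
  · exact absurd (h1 ▸ hp.2.2.1) hq.2.2.2

end Aux

/-- Every tree `T` on `n` vertices with maximum degree `Δ` satisfies
`MinBis(T) ≤ Δ log₂ n`. -/
theorem MinBisection.minBis_le_log {V : Type*} [Fintype V] (G : SimpleGraph V)
    (hT : G.IsTree) :
    (minBis G : ℝ) ≤ (maxDeg G : ℝ) * Real.logb 2 (Fintype.card V) := by
  classical
  have hne : Nonempty V := hT.isConnected.nonempty
  set n := Fintype.card V with hn
  have hn1 : 1 ≤ n := Fintype.card_pos
  obtain ⟨B, hBsub, hBcard, hBcross⟩ := main_lemma G hT n Finset.univ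
    (fun x _ => le_trans (Finset.card_le_card Comp.subset) (le_of_eq Finset.card_univ))
    (n / 2) (by rw [Finset.card_univ]; omega)
  have hc : Bᶜ.card = n - B.card := by rw [Finset.card_compl]
  have hBn : B.card ≤ n := by omega
  have hbis : IsBisection B := by constructor <;> omega
  have hle1 : minBis G ≤ cutWidth G B := Nat.sInf_le ⟨B, hbis, rfl⟩
  have hcw : cutWidth G B = (crossF G Finset.univ B).card := cutWidth_eq_crossF G B
  have hle2 : cutWidth G B ≤ maxDeg G * Nat.log 2 n := by
    rw [hcw]; exact hBcross
  calc (minBis G : ℝ) ≤ ((maxDeg G * Nat.log 2 n : ℕ) : ℝ) := by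
        exact_mod_cast le_trans hle1 hle2
    _ = (maxDeg G : ℝ) * (Nat.log 2 n : ℝ) := by push_cast; ring
    _ ≤ (maxDeg G : ℝ) * Real.logb 2 n := by
        refine mul_le_mul_of_nonneg_left ?_ (Nat.cast_nonneg _)
        have h := Real.natLog_le_logb n 2
        simpa using h
end

section
/- Let G be a graph on n vertices and let (P,X) be a path decomposition of G of width t−1, i.e., a tree decomposition whose tree is a path. Then G allows a bisection of width at most t·Δ(G), where Δ(G) is the maximum degree of G; in particular MinBis(G) ≤ t·Δ(G). -/
open scoped Classical

/-!
Order the vertices by the index of the first cluster along the path that contains them, and let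
`B` be the first half of the vertices in this order. If `m` separates the indices of `B` from
those of its complement, then every cut edge `xy` with `x ∈ B` has `x` in a cluster of index at
most `m` and, together with `y`, in a cluster of index at least `m`, so `x ∈ X^m` by (T3).
Hence the cut edges are among the at most `t Δ(G)` edges at the vertices of `X^m`.
-/

namespace MinBisection

variable {V ι : Type*}

theorem exists_card_eq_forall_le_forall_ge {α : Type*} [Fintype V] [LinearOrder α]
    [OrderBot α] (f : V → α) {k : ℕ} (hk : k ≤ Fintype.card V) :
    ∃ (B : Finset V) (m : α), B.card = k ∧ (∀ x ∈ B, f x ≤ m) ∧ ∀ y ∉ B, m ≤ f y := by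
  induction k with
  | zero => exact ⟨∅, ⊥, rfl, by simp, fun _ _ => bot_le⟩
  | succ k ih =>
    obtain ⟨B, m, hcard, hle, hge⟩ := ih (by omega)
    have hne : Bᶜ.Nonempty := by
      rw [← Finset.card_pos, Finset.card_compl]
      omega
    obtain ⟨z, hz, hzmin⟩ := Bᶜ.exists_min_image f hne
    rw [Finset.mem_compl] at hz
    refine ⟨insert z B, f z, by rw [Finset.card_insert_of_notMem hz, hcard], ?_, ?_⟩
    · intro x hx
      rcases Finset.mem_insert.1 hx with rfl | hx
      exacts [le_rfl, (hle x hx).trans (hge z hz)]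
    · intro y hy
      exact hzmin y (Finset.mem_compl.2 fun hyB => hy (Finset.mem_insert_of_mem hyB))

theorem isBisection_of_card_eq [Fintype V] {B : Finset V}
    (hB : B.card = (Fintype.card V + 1) / 2) : IsBisection B := by
  unfold IsBisection
  rw [Finset.card_compl, hB]
  omega

theorem minBis_le_cutWidth [Fintype V] (G : SimpleGraph V) {B : Finset V} (hB : IsBisection B) :
    minBis G ≤ cutWidth G B :=
  Nat.sInf_le ⟨B, hB, rfl⟩

theorem cutWidth_le_card_mul_maxDeg [Fintype V] (G : SimpleGraph V) {B S : Finset V}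
    (hS : ∀ ⦃x y⦄, G.Adj x y → x ∈ B → y ∉ B → x ∈ S) :
    cutWidth G B ≤ S.card * maxDeg G := by
  have key : ∀ e : {e : Sym2 V // ∃ x y, G.Adj x y ∧ x ∈ B ∧ y ∉ B ∧ e = s(x, y)},
      ∃ q : Σ x : S, {y // G.Adj x y}, e.1 = s(q.1.1, q.2.1) := by
    rintro ⟨e, x, y, hxy, hx, hy, rfl⟩
    exact ⟨⟨⟨x, hS hxy hx hy⟩, ⟨y, hxy⟩⟩, rfl⟩
  choose g hg using key
  have hg_inj : Function.Injective g := fun e₁ e₂ h => Subtype.ext <| by rw [hg e₁, hg e₂, h]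
  calc cutWidth G B ≤ Nat.card (Σ x : S, {y // G.Adj x y}) :=
        Nat.card_le_card_of_injective g hg_inj
    _ = ∑ x : S, Nat.card {y // G.Adj x y} := by
        simp only [Nat.card_eq_fintype_card, Fintype.card_sigma]
    _ ≤ ∑ _x : S, maxDeg G :=
        Finset.sum_le_sum fun x _ =>
          Finset.le_sup (f := fun v => Nat.card {u // G.Adj v u}) (Finset.mem_univ x.1)
    _ = S.card * maxDeg G := by simp

theorem IsTreeDecomp.mem_getVert_of_le_of_le_s19 {G : SimpleGraph V} {T : SimpleGraph ι}
    {X : ι → Finset V} (hTD : IsTreeDecomp G T X) {a b : ι} {p : T.Walk a b} (hp : p.IsPath)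
    {i m j : ℕ} (him : i ≤ m) (hmj : m ≤ j) {v : V} (hi : v ∈ X (p.getVert i))
    (hj : v ∈ X (p.getVert j)) : v ∈ X (p.getVert m) := by
  let q := (p.drop i).take (j - i)
  have hq_end : (p.drop i).getVert (j - i) = p.getVert j := by
    rw [SimpleGraph.Walk.drop_getVert, Nat.add_sub_cancel' (him.trans hmj)]
  have hq_mid : q.getVert (m - i) = p.getVert m := by
    rw [SimpleGraph.Walk.take_getVert, SimpleGraph.Walk.drop_getVert,
      min_eq_right (by omega), Nat.add_sub_cancel' him]
  have hsub := hTD.inter_subset q ((hp.drop i).take (j - i)) _ (q.getVert_mem_support (m - i))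
  rw [hq_mid] at hsub
  exact hsub (Finset.mem_inter.2 ⟨hi, hq_end ▸ hj⟩)

theorem IsTreeDecomp.mem_getVert_of_adj {G : SimpleGraph V} {T : SimpleGraph ι}
    {X : ι → Finset V} (hTD : IsTreeDecomp G T X) {a b : ι} {p : T.Walk a b} (hp : p.IsPath)
    (hcov : ∀ i, i ∈ p.support) {x y : V} (hxy : G.Adj x y) {k m : ℕ} (hkm : k ≤ m)
    (hx : x ∈ X (p.getVert k)) (hy : ∀ l < m, y ∉ X (p.getVert l)) : x ∈ X (p.getVert m) := by
  obtain ⟨i, hxi, hyi⟩ := hTD.edge_cluster hxy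
  obtain ⟨j, rfl, -⟩ := SimpleGraph.Walk.mem_support_iff_exists_getVert.1 (hcov i)
  have hmj : m ≤ j := not_lt.1 fun hjm => hy j hjm hyi
  exact hTD.mem_getVert_of_le_of_le_s19 hp hkm hmj hx hxi

end MinBisection

theorem MinBisection.minBis_le_of_pathDecomp_general {V ι : Type*} [Fintype V]
    (G : SimpleGraph V) (T : SimpleGraph ι) (X : ι → Finset V) (t : ℕ)
    (hTD : IsTreeDecomp G T X)
    (hpath : ∃ (a b : ι) (p : T.Walk a b), p.IsPath ∧ ∀ i : ι, i ∈ p.support)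
    (hwidth : ∀ i, (X i).card ≤ t) :
    (∃ B : Finset V, IsBisection B ∧ cutWidth G B ≤ t * maxDeg G) ∧
    minBis G ≤ t * maxDeg G := by
  obtain ⟨a, b, p, hp, hcov⟩ := hpath
  have hex : ∀ v, ∃ k, v ∈ X (p.getVert k) := fun v => by
    obtain ⟨i, hi⟩ := hTD.mem_cluster v
    obtain ⟨k, rfl, -⟩ := SimpleGraph.Walk.mem_support_iff_exists_getVert.1 (hcov i)
    exact ⟨k, hi⟩
  obtain ⟨B, m, hcard, hle, hge⟩ := exists_card_eq_forall_le_forall_ge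
    (fun v => Nat.find (hex v)) (k := (Fintype.card V + 1) / 2) (by omega)
  have hcut : cutWidth G B ≤ t * maxDeg G := calc
    cutWidth G B ≤ (X (p.getVert m)).card * maxDeg G :=
      cutWidth_le_card_mul_maxDeg G fun x y hxy hx hy =>
        hTD.mem_getVert_of_adj hp hcov hxy (hle x hx) (Nat.find_spec (hex x))
          fun l hl hyl => absurd hl (not_lt.2 ((hge y hy).trans (Nat.find_min' (hex y) hyl)))
    _ ≤ t * maxDeg G := Nat.mul_le_mul_right _ (hwidth _)
  have hbis := isBisection_of_card_eq hcard
  exact ⟨⟨B, hbis, hcut⟩, (minBis_le_cutWidth G hbis).trans hcut⟩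

/-- Let `G` be a graph on `n` vertices and `(P, X)` a path decomposition
of `G` of width `t - 1` (a tree decomposition whose tree is a path). Then `G` allows a
bisection of width at most `t Δ(G)`; in particular `MinBis(G) ≤ t Δ(G)`. -/
theorem MinBisection.minBis_le_of_pathDecomp {V ι : Type*} [Fintype V] [Fintype ι]
    (G : SimpleGraph V) (T : SimpleGraph ι) (X : ι → Finset V) (t : ℕ)
    (hTD : IsTreeDecomp G T X)
    (hpath : ∃ (a b : ι) (p : T.Walk a b), p.IsPath ∧ ∀ i : ι, i ∈ p.support)
    (hwidth : ∀ i, (X i).card ≤ t) :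
    (∃ B : Finset V, IsBisection B ∧ cutWidth G B ≤ t * maxDeg G) ∧
    minBis G ≤ t * maxDeg G :=
  MinBisection.minBis_le_of_pathDecomp_general G T X t hTD hpath hwidth
end
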